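/- arXiv:2306.08974 — 6 statements merged into one kernel-verified Lean document; each statement's English description precedes it below -/
import Mathlib

section
/- Fix Δ, r ∈ ℤ with Δ ≥ 2 and r ≥ 2, and let m ≥ 1 be an integer. Let G = (V, E) be a multihypergraph of maximum degree at most Δ and rank at most r, and let v ∈ V. Then the number of connected subgraphs of G with exactly m edges whose vertex set contains v is at most (e·Δ·(r−1))^m / 2. -/
/-!
Root an auxiliary digraph at `v`: its other nodes are the pairs `(e, u)` of an edge `e` and a
vertex `u ∈ e` through which `e` is entered, and the children of `(e, u)` are the pairs
`(e', u')` with `u' ∈ e \ {u}`, `u' ∈ e'` (the children of the root are the `(e, v)`). Every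
out-degree is at most `d = Δ (r - 1)`, and exploring a connected `S` with `v ∈ V(S)` yields a
set of `|S|` nodes reachable from the root inside itself, which determines `S`. Peeling off the
children of one active node at a time and summing with Vandermonde's identity shows that there
are at most `C(dm, m)` such sets of size `m`, and `C(dm, m) ≤ (dm)^m / m! ≤ (e d)^m / 2`.
-/

namespace Stmt1

variable {V Eg : Type*} [DecidableEq V] [DecidableEq Eg]

/-- The vertex set `V(S) = ⋃_{ε ∈ S} ε` of the subgraph of a multihypergraph
determined by a set `S` of edges. -/
def vertexSet (edge : Eg → Finset V) (S : Finset Eg) : Finset V :=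
  S.biUnion edge

/-- A subgraph determined by a set `S` of edges is connected if `S` is nonempty and
any two edges of `S` are joined by a chain of edges of `S` in which consecutive
edges intersect. -/
def ConnectedSub (edge : Eg → Finset V) (S : Finset Eg) : Prop :=
  S.Nonempty ∧ ∀ a ∈ S, ∀ b ∈ S,
    Relation.ReflTransGen (fun x y => x ∈ S ∧ y ∈ S ∧ (edge x ∩ edge y).Nonempty) a b

/-- The degree of a vertex `v`: the number of edges containing `v`. -/
noncomputable def degree [Fintype Eg] (edge : Eg → Finset V) (v : V) : ℕ :=
  Nat.card {e : Eg // v ∈ edge e}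

open Finset Relation

theorem _root_.Relation.ReflTransGen.exists_rel_crossing {α : Type*} {r : α → α → Prop}
    {p : α → Prop} {a b : α} (h : ReflTransGen r a b) (ha : p a) (hb : ¬ p b) :
    ∃ x y, p x ∧ ¬ p y ∧ r x y := by
  induction h with
  | refl => exact absurd ha hb
  | @tail c d _ hcd ih =>
    by_cases hc : p c
    · exact ⟨c, d, hc, hb, hcd⟩
    · exact ih hc

theorem _root_.Finset.card_le_add_choose_of_card_fiber_inter_le {α : Type*} [DecidableEq α]
    (s : Finset α) {𝒯 : Finset (Finset α)} {m M : ℕ} (h𝒯 : ∀ T ∈ 𝒯, #T = m)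
    (hfiber : ∀ j ≤ m, ∀ J ∈ powersetCard j s, #{T ∈ 𝒯 | s ∩ T = J} ≤ M.choose (m - j)) :
    #𝒯 ≤ (#s + M).choose m := by
  have hmaps : (𝒯 : Set (Finset α)).MapsTo (s ∩ ·)
      ((range (m + 1)).biUnion (powersetCard · s)) := fun T hT =>
    mem_biUnion.2 ⟨#(s ∩ T), mem_range_succ_iff.2 ((card_le_card inter_subset_right).trans
      (h𝒯 T hT).le), mem_powersetCard.2 ⟨inter_subset_left, rfl⟩⟩
  calc #𝒯 = ∑ J ∈ (range (m + 1)).biUnion (powersetCard · s), #{T ∈ 𝒯 | s ∩ T = J} :=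
        card_eq_sum_card_fiberwise hmaps
    _ = ∑ j ∈ range (m + 1), ∑ J ∈ powersetCard j s, #{T ∈ 𝒯 | s ∩ T = J} :=
        sum_biUnion ((pairwise_disjoint_powersetCard _).set_pairwise _)
    _ ≤ ∑ j ∈ range (m + 1), ∑ J ∈ powersetCard j s, M.choose (m - j) :=
        sum_le_sum fun j hj => sum_le_sum (hfiber j (mem_range_succ_iff.1 hj))
    _ = (#s + M).choose m := by
        simp only [sum_const, card_powersetCard, smul_eq_mul]
        rw [Nat.add_choose_eq, Nat.sum_antidiagonal_eq_sum_range_succ_mk]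

theorem _root_.Finset.card_image_sdiff_filter_inter_eq {α : Type*} [DecidableEq α]
    (𝒯 : Finset (Finset α)) (s J : Finset α) :
    #({T ∈ 𝒯 | s ∩ T = J}.image (· \ s)) = #{T ∈ 𝒯 | s ∩ T = J} := by
  refine card_image_of_injOn fun T hT T' hT' h => ?_
  simp only [mem_coe, mem_filter] at hT hT'
  rw [← sdiff_union_inter T s, ← sdiff_union_inter T' s, inter_comm, inter_comm T', hT.2, hT'.2]
  exact congrArg (· ∪ J) h

section Reachable

variable {X : Type*} [DecidableEq X] (nbr : X → Finset X)

def ReachableFrom (A T : Finset X) : Prop :=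
  Disjoint A T ∧ ∀ x ∈ T, ∃ a ∈ A, TransGen (fun y z => z ∈ T ∧ z ∈ nbr y) a x

variable {nbr}

theorem ReachableFrom.exists_parent {A T : Finset X} (hT : ReachableFrom nbr A T) {x : X}
    (hx : x ∈ T) : ∃ y ∈ A ∪ T, x ∈ nbr y := by
  obtain ⟨a, ha, hax⟩ := hT.2 x hx
  obtain ⟨y, hay, hyx⟩ := TransGen.tail'_iff.1 hax
  refine ⟨y, ?_, hyx.2⟩
  rcases hay.cases_tail with rfl | ⟨z, -, hzy⟩
  · exact mem_union_left _ ha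
  · exact mem_union_right _ hzy.1

theorem ReachableFrom.insert {A T : Finset X} (hT : ReachableFrom nbr A T) {x y : X}
    (hx : x ∈ A ∪ T) (hy : y ∈ nbr x) (hyA : y ∉ A) : ReachableFrom nbr A (insert y T) := by
  have mono : TransGen (fun y z => z ∈ T ∧ z ∈ nbr y) ≤
      TransGen (fun y' z => z ∈ Insert.insert y T ∧ z ∈ nbr y') :=
    TransGen.mono fun _ _ h => ⟨mem_insert_of_mem h.1, h.2⟩
  refine ⟨disjoint_insert_right.2 ⟨hyA, hT.1⟩, fun z hz => ?_⟩
  rcases mem_insert.1 hz with rfl | hz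
  · rcases mem_union.1 hx with hx | hx
    · exact ⟨x, hx, .single ⟨mem_insert_self _ _, hy⟩⟩
    · obtain ⟨a, ha, hax⟩ := hT.2 x hx
      exact ⟨a, ha, .tail (mono _ _ hax) ⟨mem_insert_self _ _, hy⟩⟩
  · obtain ⟨a, ha, haz⟩ := hT.2 z hz
    exact ⟨a, ha, mono _ _ haz⟩

theorem ReachableFrom.sdiff_nbr {A T : Finset X} (hT : ReachableFrom nbr A T) {a : X}
    (ha : a ∈ A) : ReachableFrom nbr (A.erase a ∪ (nbr a ∩ T)) (T \ nbr a) := by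
  set A' := A.erase a ∪ (nbr a ∩ T)
  have key : ∀ {a₀ y}, a₀ ∈ A → TransGen (fun y z => z ∈ T ∧ z ∈ nbr y) a₀ y →
      y ∈ A' ∨ ∃ b ∈ A', TransGen (fun y z => z ∈ T \ nbr a ∧ z ∈ nbr y) b y := by
    intro a₀ y ha₀ h
    induction h with
    | @single z hz =>
      by_cases hza : z ∈ nbr a
      · exact .inl (mem_union_right _ (mem_inter.2 ⟨hza, hz.1⟩))
      · have : a₀ ≠ a := by rintro rfl; exact hza hz.2
        exact .inr ⟨a₀, mem_union_left _ (mem_erase.2 ⟨this, ha₀⟩),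
          .single ⟨mem_sdiff.2 ⟨hz.1, hza⟩, hz.2⟩⟩
    | @tail y z _ hyz ih =>
      by_cases hza : z ∈ nbr a
      · exact .inl (mem_union_right _ (mem_inter.2 ⟨hza, hyz.1⟩))
      · have hz : z ∈ T \ nbr a := mem_sdiff.2 ⟨hyz.1, hza⟩
        rcases ih with hy | ⟨b, hb, hby⟩
        · exact .inr ⟨y, hy, .single ⟨hz, hyz.2⟩⟩
        · exact .inr ⟨b, hb, .tail hby ⟨hz, hyz.2⟩⟩
  refine ⟨?_, fun x hx => ?_⟩
  · exact disjoint_union_left.2 ⟨(hT.1.mono_left (erase_subset _ _)).mono_right sdiff_subset,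
      disjoint_of_subset_left inter_subset_left disjoint_sdiff⟩
  · obtain ⟨hxT, hxa⟩ := mem_sdiff.1 hx
    obtain ⟨a₀, ha₀, h⟩ := hT.2 x hxT
    refine (key ha₀ h).resolve_left fun hx' => ?_
    rcases mem_union.1 hx' with hx' | hx'
    · exact disjoint_left.1 hT.1 (mem_of_mem_erase hx') hxT
    · exact hxa (mem_inter.1 hx').1

/-- Induction on `#A + m`: the children `J` of an active node `a` that lie in `T` become active,
and `T \ J` is reachable from `A.erase a ∪ J`. -/
theorem card_le_choose_of_reachableFrom {d : ℕ} (hd : ∀ x, #(nbr x) ≤ d) (A : Finset X) (m : ℕ)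
    (𝒯 : Finset (Finset X)) (h𝒯 : ∀ T ∈ 𝒯, ReachableFrom nbr A T ∧ #T = m) :
    #𝒯 ≤ (d * (#A + m - 1)).choose m := by
  induction hn : #A + m using Nat.strong_induction_on generalizing A m 𝒯 with
  | _ n ih =>
  subst hn
  obtain rfl | hm := m.eq_zero_or_pos
  · rw [Nat.choose_zero_right, card_le_one]
    intro T hT T' hT'
    rw [card_eq_zero.1 (h𝒯 T hT).2, card_eq_zero.1 (h𝒯 T' hT').2]
  obtain rfl | ⟨a, ha⟩ := A.eq_empty_or_nonempty
  · have : 𝒯 = ∅ := eq_empty_of_forall_notMem fun T hT => by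
      obtain ⟨x, hx⟩ := card_pos.1 ((h𝒯 T hT).2 ▸ hm)
      obtain ⟨b, hb, -⟩ := (h𝒯 T hT).1.2 x hx
      exact notMem_empty b hb
    simp [this]
  have hA := card_pos.2 ⟨a, ha⟩
  have hsplit : d * (#A + m - 1) = d + d * (#A + m - 2) := by
    rw [← mul_one_add]; congr 1; omega
  rw [hsplit]
  refine (card_le_add_choose_of_card_fiber_inter_le (nbr a) (fun T hT => (h𝒯 T hT).2)
    fun j hj J hJ => ?_).trans (Nat.choose_le_choose _ (Nat.add_le_add_right (hd a) _))
  rw [mem_powersetCard] at hJ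
  have hA' : #(A.erase a ∪ J) ≤ #A - 1 + j :=
    (card_union_le _ _).trans (by rw [card_erase_of_mem ha, hJ.2])
  calc #{T ∈ 𝒯 | nbr a ∩ T = J} = #({T ∈ 𝒯 | nbr a ∩ T = J}.image (· \ nbr a)) :=
        (card_image_sdiff_filter_inter_eq _ _ _).symm
    _ ≤ (d * (#(A.erase a ∪ J) + (m - j) - 1)).choose (m - j) := by
        refine ih _ ?_ _ _ _ ?_ rfl
        · omega
        · simp only [mem_image, mem_filter]
          rintro _ ⟨T, ⟨hT, rfl⟩, rfl⟩
          refine ⟨(h𝒯 T hT).1.sdiff_nbr ha, ?_⟩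
          rw [card_sdiff, (h𝒯 T hT).2, hJ.2]
    _ ≤ (d * (#A + m - 2)).choose (m - j) :=
        Nat.choose_le_choose _ (Nat.mul_le_mul_left _ (by omega))

end Reachable

section Hypergraph

variable [Fintype Eg] (edge : Eg → Finset V) (v : V)

def entriesAt (u : V) : Finset (Option (Eg × V)) :=
  ({e | u ∈ edge e} : Finset Eg).image fun e => some (e, u)

/-- `none` is the root, standing for `v`; `some (e, u)` is the edge `e` entered through `u`.
The guard keeps the out-degree at most `(r - 1) Δ` also at the unreachable pairs with `u ∉ e`. -/
def exitVertices : Option (Eg × V) → Finset V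
  | none => {v}
  | some (e, u) => if u ∈ edge e then (edge e).erase u else ∅

def childEntries (x : Option (Eg × V)) : Finset (Option (Eg × V)) :=
  (exitVertices edge v x).biUnion (entriesAt edge)

variable {edge v}

theorem mem_childEntries {x : Option (Eg × V)} {c : Eg} {w : V} :
    some (c, w) ∈ childEntries edge v x ↔ w ∈ exitVertices edge v x ∧ w ∈ edge c := by
  simp [childEntries, entriesAt, and_comm]

theorem card_entriesAt_le (u : V) : #(entriesAt edge u) ≤ degree edge u :=
  card_image_le.trans (by rw [degree, Nat.card_eq_fintype_card, Fintype.card_subtype])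

theorem card_childEntries_le {Δ r : ℕ} (hdeg : ∀ u, degree edge u ≤ Δ)
    (hrank : ∀ e, #(edge e) ≤ r) (hr : 2 ≤ r) (x : Option (Eg × V)) :
    #(childEntries edge v x) ≤ (r - 1) * Δ := by
  have hexit : #(exitVertices edge v x) ≤ r - 1 := by
    rcases x with _ | ⟨e, u⟩
    · simp only [exitVertices, card_singleton]; omega
    · simp only [exitVertices]
      split_ifs with hu
      · rw [card_erase_of_mem hu]; have := hrank e; omega
      · simp
  exact (card_biUnion_le_card_mul _ _ _ fun u _ => (card_entriesAt_le u).trans (hdeg u)).trans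
    (Nat.mul_le_mul_right _ hexit)

theorem exists_mem_childEntries_of_mem_inter {T : Finset (Option (Eg × V))}
    (hT : ReachableFrom (childEntries edge v) {none} T) {b c : Eg} {u w : V}
    (hb : some (b, u) ∈ T) (hwb : w ∈ edge b) (hwc : w ∈ edge c) :
    ∃ x ∈ {none} ∪ T, some (c, w) ∈ childEntries edge v x := by
  obtain ⟨y, hy, hby⟩ := hT.exists_parent hb
  rw [mem_childEntries] at hby
  by_cases hwu : w = u
  · subst hwu
    exact ⟨y, hy, mem_childEntries.2 ⟨hby.1, hwc⟩⟩
  · refine ⟨some (b, u), mem_union_right _ hb, mem_childEntries.2 ⟨?_, hwc⟩⟩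
    simp [exitVertices, hby.2, hwu, hwb]

variable {S : Finset Eg}

theorem exists_uncovered_childEntry (hS : ConnectedSub edge S) (hv : v ∈ vertexSet edge S)
    {T : Finset (Option (Eg × V))} (hT : ReachableFrom (childEntries edge v) {none} T)
    {c' : Eg} (hc'S : c' ∈ S) (hc'T : some c' ∉ T.image (Option.map Prod.fst)) :
    ∃ c ∈ S, some c ∉ T.image (Option.map Prod.fst) ∧
      ∃ w, ∃ x ∈ {none} ∪ T, some (c, w) ∈ childEntries edge v x := by
  obtain ⟨e₀, he₀S, hve₀⟩ := mem_biUnion.1 hv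
  by_cases he₀T : some e₀ ∈ T.image (Option.map Prod.fst)
  · obtain ⟨b, c, hbT, hcT, -, hcS, w, hw⟩ :=
      (hS.2 e₀ he₀S c' hc'S).exists_rel_crossing (p := fun e => some e ∈ T.image _) he₀T hc'T
    obtain ⟨x, hxT, hxb⟩ := mem_image.1 hbT
    obtain ⟨⟨b', u⟩, rfl, rfl⟩ := Option.map_eq_some_iff.1 hxb
    exact ⟨c, hcS, hcT, w,
      exists_mem_childEntries_of_mem_inter hT hxT (mem_inter.1 hw).1 (mem_inter.1 hw).2⟩
  · exact ⟨e₀, he₀S, he₀T, v, none, by simp, mem_childEntries.2 ⟨by simp [exitVertices], hve₀⟩⟩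

theorem exists_reachableFrom_image_eq (hS : ConnectedSub edge S) (hv : v ∈ vertexSet edge S) :
    ∃ T, ReachableFrom (childEntries edge v) {none} T ∧ #T = #S ∧
      T.image (Option.map Prod.fst) = S.image some := by
  suffices h : ∀ k ≤ #S, ∃ T, ReachableFrom (childEntries edge v) {none} T ∧ #T = k ∧
      T.image (Option.map Prod.fst) ⊆ S.image some ∧ #(T.image (Option.map Prod.fst)) = k by
    obtain ⟨T, hT, hcard, hsub, himage⟩ := h _ le_rfl
    refine ⟨T, hT, hcard, eq_of_subset_of_card_le hsub ?_⟩
    rw [himage, card_image_of_injective _ (Option.some_injective _)]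
  intro k hk
  induction k with
  | zero => exact ⟨∅, ⟨disjoint_empty_right _, by simp⟩, rfl, by simp, rfl⟩
  | succ k ih =>
    obtain ⟨T, hT, hcard, hsub, himage⟩ := ih (by omega)
    obtain ⟨c', hc'S, hc'T⟩ : ∃ c' ∈ S, some c' ∉ T.image (Option.map Prod.fst) := by
      by_contra! h
      have := card_le_card (image_subset_iff.2 h)
      rw [card_image_of_injective _ (Option.some_injective _)] at this
      omega
    obtain ⟨c, hcS, hcT, w, x, hx, hcw⟩ := exists_uncovered_childEntry hS hv hT hc'S hc'T
    have hnew : some (c, w) ∉ T := fun h => hcT (mem_image.2 ⟨_, h, rfl⟩)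
    refine ⟨insert (some (c, w)) T, hT.insert hx hcw (by simp), ?_, ?_, ?_⟩
    · rw [card_insert_of_notMem hnew, hcard]
    · rw [image_insert]
      exact insert_subset (mem_image_of_mem _ hcS) hsub
    · rw [image_insert, Option.map_some, card_insert_of_notMem hcT, himage]

theorem card_connectedSub_le_choose {Δ r : ℕ} (hdeg : ∀ u, degree edge u ≤ Δ)
    (hrank : ∀ e, #(edge e) ≤ r) (hr : 2 ≤ r) (m : ℕ) :
    Nat.card {S : Finset Eg // ConnectedSub edge S ∧ S.card = m ∧ v ∈ vertexSet edge S} ≤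
      ((r - 1) * Δ * m).choose m := by
  classical
  rw [Nat.card_eq_fintype_card, Fintype.card_subtype]
  set 𝒮 : Finset (Finset Eg) := {S | ConnectedSub edge S ∧ S.card = m ∧ v ∈ vertexSet edge S}
  have hspan : ∀ S ∈ 𝒮, ∃ T, ReachableFrom (childEntries edge v) {none} T ∧ #T = #S ∧
      T.image (Option.map Prod.fst) = S.image some := fun S hS =>
    exists_reachableFrom_image_eq (mem_filter.1 hS).2.1 (mem_filter.1 hS).2.2.2
  choose! T hT hcard himage using hspan
  have hinj : Set.InjOn T 𝒮 := fun S hS S' hS' h =>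
    image_injective (Option.some_injective _) (by rw [← himage S hS, ← himage S' hS', h])
  calc #𝒮 = #(𝒮.image T) := (card_image_of_injOn hinj).symm
    _ ≤ ((r - 1) * Δ * (#{none} + m - 1)).choose m := by
        refine card_le_choose_of_reachableFrom (card_childEntries_le (v := v) hdeg hrank hr)
          _ m _ ?_
        simp only [mem_image]
        rintro _ ⟨S, hS, rfl⟩
        exact ⟨hT S hS, (hcard S hS).trans (mem_filter.1 hS).2.2.1⟩
    _ = ((r - 1) * Δ * m).choose m := by simp

end Hypergraph

open Real Nat in
theorem choose_mul_le_exp_mul_pow (d : ℕ) {m : ℕ} (hm : 1 ≤ m) :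
    ((d * m).choose m : ℝ) ≤ (exp 1 * d) ^ m / 2 := by
  obtain ⟨k, rfl⟩ : ∃ k, m = k + 1 := ⟨m - 1, by omega⟩
  have hterm : ((k : ℝ) + 1) ^ k / k ! = ((k : ℝ) + 1) ^ (k + 1) / (k + 1)! := by
    rw [Nat.factorial_succ]; push_cast; field_simp; ring
  -- `m^m / m!` occurs twice in the series of `e^m`, as the terms of index `m - 1` and `m`.
  have hexp : 2 * (((k : ℝ) + 1) ^ (k + 1) / (k + 1)!) ≤ exp (k + 1) := by
    have hsum := sum_le_exp_of_nonneg (x := k + 1) (by positivity) (k + 2)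
    rw [sum_range_succ, sum_range_succ] at hsum
    have : 0 ≤ ∑ i ∈ range k, ((k : ℝ) + 1) ^ i / i ! := by positivity
    linarith
  calc ((d * (k + 1)).choose (k + 1) : ℝ) ≤ ((d * (k + 1) : ℕ) : ℝ) ^ (k + 1) / (k + 1)! :=
        Nat.choose_le_pow_div _ _
    _ = (d : ℝ) ^ (k + 1) * (((k : ℝ) + 1) ^ (k + 1) / (k + 1)!) := by
        push_cast; rw [mul_pow, mul_div_assoc]
    _ ≤ (d : ℝ) ^ (k + 1) * (exp (k + 1) / 2) :=
        mul_le_mul_of_nonneg_left (by linarith) (by positivity)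
    _ = (exp 1 * d) ^ (k + 1) / 2 := by rw [mul_pow, exp_one_pow]; push_cast; ring

theorem card_connected_subgraphs_le_general
    [Fintype Eg] (Δ r : ℤ) (hr : 2 ≤ r) (m : ℕ) (hm : 1 ≤ m)
    (edge : Eg → Finset V)
    (hdeg : ∀ v : V, (degree edge v : ℤ) ≤ Δ)
    (hrank : ∀ e : Eg, ((edge e).card : ℤ) ≤ r)
    (v : V) :
    (Nat.card {S : Finset Eg //
        ConnectedSub edge S ∧ S.card = m ∧ v ∈ vertexSet edge S} : ℝ) ≤
      (Real.exp 1 * Δ * (r - 1)) ^ m / 2 := by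
  lift Δ to ℕ using (Int.natCast_nonneg _).trans (hdeg v)
  lift r to ℕ using by omega
  calc _ ≤ (((r - 1) * Δ * m).choose m : ℝ) := by
        exact_mod_cast card_connectedSub_le_choose (fun u => by exact_mod_cast hdeg u)
          (fun e => by exact_mod_cast hrank e) (by exact_mod_cast hr) m
    _ ≤ (Real.exp 1 * ((r - 1) * Δ : ℕ)) ^ m / 2 := choose_mul_le_exp_mul_pow _ hm
    _ = _ := by push_cast [Nat.cast_sub (by omega : 1 ≤ r)]; ring

/-- **Lemma 2 of the paper.** Let `G` be a multihypergraph of maximum degree at most `Δ`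
and rank at most `r` (with `Δ, r ≥ 2`), and let `v` be a vertex.  The number of connected
subgraphs of `G` with exactly `m ≥ 1` edges whose vertex set contains `v` is at most
`(e·Δ·(r−1))^m / 2`. -/
theorem card_connected_subgraphs_le
    [Fintype Eg] (Δ r : ℤ) (hΔ : 2 ≤ Δ) (hr : 2 ≤ r) (m : ℕ) (hm : 1 ≤ m)
    (edge : Eg → Finset V)
    (hne : ∀ e : Eg, (edge e).Nonempty)
    (hdeg : ∀ v : V, (degree edge v : ℤ) ≤ Δ)
    (hrank : ∀ e : Eg, ((edge e).card : ℤ) ≤ r)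
    (v : V) :
    (Nat.card {S : Finset Eg //
        ConnectedSub edge S ∧ S.card = m ∧ v ∈ vertexSet edge S} : ℝ) ≤
      (Real.exp 1 * Δ * (r - 1)) ^ m / 2 :=
  card_connected_subgraphs_le_general Δ r hr m hm edge hdeg hrank v

end Stmt1
end

section
/- Fix Δ, r ∈ ℤ with Δ ≥ 2 and r ≥ 2. Let G = (V, E) be a multihypergraph of maximum degree at most Δ and rank at most r, and let w assign to each polymer γ (connected subgraph of G with at least one edge) a complex weight w_γ with |w_γ| ≤ (1/(e³·Δ·C(r,2)))^{‖γ‖}, where C(r,2) = r(r−1)/2. Then for every vertex v ∈ V, Σ_{γ : v ∈ V(γ)} |w_γ| · exp( (1/2)·( |γ|/(r−1) + ‖γ‖ ) ) ≤ 1/(2(r−1)), where the sum is over all polymers whose vertex set contains v, |γ| is the number of vertices of γ, and ‖γ‖ the number of edges of γ. -/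
/-!
Put `q = 1/(e³ΔC(r,2))`, `μ = e q` and `a = e^{-1/2}/(2Δ(r-1))`. A polymer `γ` has at most
`(r-1)‖γ‖ + 1` vertices, so its term is at most `e^{1/(2(r-1))} μ^{‖γ‖}`. Deleting an edge `f`
from a polymer through `f` leaves disjoint smaller polymers, each through its own edge meeting
`f`, and at most `r(Δ-1)` edges meet `f`; by induction on the size, the polymers through `f`
have total weight `∑ μ^{‖γ‖} ≤ a` because `μ(1+a)^{r(Δ-1)} ≤ a`. Summing over the at most `Δ`
edges at `v` gives `e^{1/(2(r-1))} Δ a ≤ 1/(2(r-1))`.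
-/

open scoped Classical

namespace Stmt3

variable {V Eg : Type*} [DecidableEq V] [DecidableEq Eg]

/-- The vertex set `V(S) = ⋃_{ε ∈ S} ε` of the subgraph of a multihypergraph
determined by a set `S` of edges. -/
def vertexSet (edge : Eg → Finset V) (S : Finset Eg) : Finset V :=
  S.biUnion edge

/-- A subgraph determined by a set `S` of edges is connected if `S` is nonempty and
any two edges of `S` are joined by a chain of edges of `S` in which consecutive
edges intersect.  Polymers are exactly the connected subgraphs. -/
def ConnectedSub (edge : Eg → Finset V) (S : Finset Eg) : Prop :=
  S.Nonempty ∧ ∀ a ∈ S, ∀ b ∈ S,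
    Relation.ReflTransGen (fun x y => x ∈ S ∧ y ∈ S ∧ (edge x ∩ edge y).Nonempty) a b

/-- The degree of a vertex `v`: the number of edges containing `v`. -/
noncomputable def degree [Fintype Eg] (edge : Eg → Finset V) (v : V) : ℕ :=
  Nat.card {e : Eg // v ∈ edge e}

open Finset Relation

section Components

variable {ι : Type*} {R : ι → ι → Prop} {S C : Finset ι} {f g h : ι}

def Linked (R : ι → ι → Prop) (S : Finset ι) : ι → ι → Prop :=
  ReflTransGen fun x y => x ∈ S ∧ y ∈ S ∧ R x y

def ChainConnected (R : ι → ι → Prop) (S : Finset ι) : Prop :=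
  S.Nonempty ∧ ∀ a ∈ S, ∀ b ∈ S, Linked R S a b

noncomputable def component (R : ι → ι → Prop) (S : Finset ι) (g : ι) : Finset ι :=
  S.filter (Linked R S g)

theorem Linked.symm [Std.Symm R] (hgh : Linked R S g h) : Linked R S h g := by
  induction hgh with
  | refl => exact .refl
  | tail _ step ih => exact ih.head ⟨step.2.1, step.1, symm_of R step.2.2⟩

theorem mem_component : h ∈ component R S g ↔ h ∈ S ∧ Linked R S g h := mem_filter

theorem component_subset : component R S g ⊆ S := filter_subset _ _

theorem self_mem_component (hg : g ∈ S) : g ∈ component R S g :=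
  mem_component.2 ⟨hg, .refl⟩

theorem component_eq_of_linked [Std.Symm R] (hgh : Linked R S g h) :
    component R S g = component R S h := by
  ext a
  simp only [mem_component]
  exact and_congr_right fun _ => ⟨hgh.symm.trans, hgh.trans⟩

theorem Linked.in_component (hgh : Linked R S g h) :
    Linked R (component R S g) g h := by
  induction hgh with
  | refl => exact .refl
  | tail hgb step ih =>
    exact ih.tail ⟨mem_component.2 ⟨step.1, hgb⟩,
      mem_component.2 ⟨step.2.1, hgb.tail step⟩, step.2.2⟩

theorem chainConnected_component [Std.Symm R] (hg : g ∈ S) :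
    ChainConnected R (component R S g) := by
  refine ⟨⟨g, self_mem_component hg⟩, fun a ha b hb => ?_⟩
  rw [mem_component] at ha hb
  exact ha.2.in_component.symm.trans hb.2.in_component

noncomputable def anchor (R : ι → ι → Prop) (f : ι) (C : Finset ι) : ι :=
  if hC : ∃ g ∈ C, R f g then hC.choose else f

theorem anchor_spec (hC : ∃ g ∈ C, R f g) : anchor R f C ∈ C ∧ R f (anchor R f C) := by
  rw [anchor, dif_pos hC]
  exact hC.choose_spec

variable [DecidableEq ι]

/-- Follow a chain in `S` from `h` to `f` and stop just before it first reaches `f`. -/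
theorem exists_rel_mem_component_erase [Std.Symm R] (hS : ChainConnected R S)
    (hf : f ∈ S) (hh : h ∈ S.erase f) :
    ∃ g ∈ component R (S.erase f) h, R f g := by
  have key : ∀ c, Linked R S h c →
      (c ≠ f ∧ Linked R (S.erase f) h c) ∨ ∃ g ∈ component R (S.erase f) h, R g f := by
    intro c hc
    induction hc with
    | refl => exact .inl ⟨(mem_erase.1 hh).1, .refl⟩
    | @tail b c _ step ih =>
      rcases ih with ⟨hbf, hhb⟩ | hex
      · by_cases hcf : c = f
        · exact .inr ⟨b, mem_component.2 ⟨mem_erase.2 ⟨hbf, step.1⟩, hhb⟩, hcf ▸ step.2.2⟩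
        · exact .inl ⟨hcf, hhb.tail ⟨mem_erase.2 ⟨hbf, step.1⟩,
            mem_erase.2 ⟨hcf, step.2.1⟩, step.2.2⟩⟩
      · exact .inr hex
  obtain ⟨g, hg, hgf⟩ := (key f (hS.2 h (mem_of_mem_erase hh) f hf)).resolve_left (by simp)
  exact ⟨g, hg, symm_of R hgf⟩

/-- The components of `S.erase f`, each indexed by its anchor, a chosen neighbour of `f` in it;
every other index gets `∅`. -/
noncomputable def piece (R : ι → ι → Prop) (f : ι) (S : Finset ι) (g : ι) : Finset ι :=
  if g ∈ S.erase f ∧ anchor R f (component R (S.erase f) g) = g then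
    component R (S.erase f) g else ∅

theorem piece_subset : piece R f S g ⊆ S.erase f := by
  unfold piece
  split_ifs
  exacts [component_subset, empty_subset _]

theorem piece_eq_empty_or [Std.Symm R] :
    piece R f S g = ∅ ∨ (ChainConnected R (piece R f S g) ∧ g ∈ piece R f S g ∧ R f g) := by
  unfold piece
  split_ifs with hg
  · refine .inr ⟨chainConnected_component hg.1, self_mem_component hg.1, ?_⟩
    by_cases hC : ∃ g' ∈ component R (S.erase f) g, R f g'
    · exact hg.2 ▸ (anchor_spec hC).2
    · have hfg : f = g := by rw [← hg.2, anchor, dif_neg hC]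
      exact absurd hfg.symm (mem_erase.1 hg.1).1
  · exact .inl rfl

theorem piece_disjoint [Std.Symm R] {g₁ g₂ : ι} (hne : g₁ ≠ g₂) :
    Disjoint (piece R f S g₁) (piece R f S g₂) := by
  rw [disjoint_left]
  intro a ha₁ ha₂
  unfold piece at ha₁ ha₂
  split_ifs at ha₁ ha₂ with h₁ h₂ <;> try simp only [notMem_empty] at ha₁ ha₂
  have hC : component R (S.erase f) g₁ = component R (S.erase f) g₂ := by
    rw [component_eq_of_linked (mem_component.1 ha₁).2,
      component_eq_of_linked (mem_component.1 ha₂).2]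
  exact hne (h₁.2.symm.trans (hC ▸ h₂.2))

variable [Fintype ι]

theorem biUnion_piece [Std.Symm R] (hS : ChainConnected R S) (hf : f ∈ S) :
    univ.biUnion (piece R f S) = S.erase f := by
  refine Subset.antisymm (biUnion_subset.2 fun _ _ => piece_subset) fun h hh => ?_
  set C := component R (S.erase f) h
  have hC := anchor_spec (exists_rel_mem_component_erase hS hf hh)
  have hCa : component R (S.erase f) (anchor R f C) = C :=
    (component_eq_of_linked (mem_component.1 hC.1).2).symm
  have hpiece : piece R f S (anchor R f C) = C := by
    rw [piece, if_pos ⟨component_subset hC.1, by rw [hCa]⟩, hCa]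
  exact mem_biUnion.2 ⟨_, mem_univ _, by rw [hpiece]; exact self_mem_component hh⟩

theorem insert_biUnion_piece [Std.Symm R] (hS : ChainConnected R S) (hf : f ∈ S) :
    insert f (univ.biUnion (piece R f S)) = S := by
  rw [biUnion_piece hS hf, insert_erase hf]

theorem sum_card_piece_add_one [Std.Symm R] (hS : ChainConnected R S) (hf : f ∈ S) :
    ∑ g, #(piece R f S g) + 1 = #S := by
  rw [← card_biUnion fun _ _ _ _ => piece_disjoint, biUnion_piece hS hf, card_erase_add_one hf]

end Components

section ClusterBound

variable {ι : Type*} [DecidableEq ι] [Fintype ι] {R : ι → ι → Prop}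

noncomputable def neighbors (R : ι → ι → Prop) (f : ι) : Finset ι :=
  univ.filter fun g => g ≠ f ∧ R f g

noncomputable def connectedSetsThrough (R : ι → ι → Prop) (k : ℕ) (f : ι) :
    Finset (Finset ι) :=
  univ.filter fun S => ChainConnected R S ∧ f ∈ S ∧ #S ≤ k

noncomputable def pieceChoices (R : ι → ι → Prop) (k : ℕ) (f g : ι) : Finset (Finset ι) :=
  if g ∈ neighbors R f then insert ∅ (connectedSetsThrough R k g) else {∅}

theorem piece_mem_pieceChoices [Std.Symm R] {k : ℕ} {f : ι} {S : Finset ι}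
    (hS : S ∈ connectedSetsThrough R (k + 1) f) (g : ι) :
    piece R f S g ∈ pieceChoices R k f g := by
  obtain ⟨hconn, hf, hcard⟩ := (mem_filter.1 hS).2
  rcases piece_eq_empty_or (R := R) (f := f) (S := S) (g := g) with hempty | ⟨hpc, hg, hfg⟩
  · unfold pieceChoices
    split_ifs <;> simp [hempty]
  · have hgf : g ≠ f := (mem_erase.1 (piece_subset hg)).1
    have hsmall : #(piece R f S g) ≤ k := by
      have := card_le_card (piece_subset (R := R) (f := f) (S := S) (g := g))
      rw [card_erase_of_mem hf] at this
      omega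
    have hnb : g ∈ neighbors R f := mem_filter.2 ⟨mem_univ _, hgf, hfg⟩
    rw [pieceChoices, if_pos hnb]
    exact mem_insert_of_mem (mem_filter.2 ⟨mem_univ _, hpc, hg, hsmall⟩)

theorem sum_pieceChoices_le {k : ℕ} {μ a : ℝ}
    (ih : ∀ g, ∑ T ∈ connectedSetsThrough R k g, μ ^ #T ≤ a) (f g : ι) :
    ∑ T ∈ pieceChoices R k f g, μ ^ #T ≤ if g ∈ neighbors R f then 1 + a else 1 := by
  unfold pieceChoices
  split_ifs
  · have hempty : ∅ ∉ connectedSetsThrough R k g := fun h => by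
      simp [connectedSetsThrough] at h
    rw [sum_insert hempty, card_empty, pow_zero]
    exact add_le_add_right (ih g) 1
  · simp

/-- The pieces left by deleting `f` from `S` determine `S`, so at size `k + 1` the sum is at
most `μ ∏_{g ∼ f} (1 + a)`. -/
theorem sum_connectedSetsThrough_le [Std.Symm R] {μ a : ℝ} (hμ : 0 ≤ μ) (ha : 0 ≤ a)
    (hKP : ∀ f, μ * (1 + a) ^ #(neighbors R f) ≤ a) (k : ℕ) (f : ι) :
    ∑ S ∈ connectedSetsThrough R k f, μ ^ #S ≤ a := by
  induction k generalizing f with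
  | zero =>
    have hempty : connectedSetsThrough R 0 f = ∅ := by
      ext S
      simp only [connectedSetsThrough, mem_filter, notMem_empty, iff_false]
      exact fun ⟨_, _, hS, hcard⟩ => (card_ne_zero_of_mem hS) (by omega)
    rw [hempty, sum_empty]
    exact ha
  | succ k ih =>
    set P := connectedSetsThrough R (k + 1) f
    have hconn : ∀ S ∈ P, ChainConnected R S ∧ f ∈ S := fun S hS => ⟨(mem_filter.1 hS).2.1,
      (mem_filter.1 hS).2.2.1⟩
    have hinj : Set.InjOn (piece R f) P := fun S₁ h₁ S₂ h₂ heq => by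
      rw [← insert_biUnion_piece (hconn S₁ h₁).1 (hconn S₁ h₁).2,
        ← insert_biUnion_piece (hconn S₂ h₂).1 (hconn S₂ h₂).2, heq]
    calc ∑ S ∈ P, μ ^ #S
        = μ * ∑ x ∈ P.image (piece R f), ∏ g, μ ^ #(x g) := by
          rw [sum_image hinj, mul_sum]
          refine sum_congr rfl fun S hS => ?_
          rw [prod_pow_eq_pow_sum, ← sum_card_piece_add_one (hconn S hS).1 (hconn S hS).2,
            pow_succ']
      _ ≤ μ * ∑ x ∈ Fintype.piFinset (pieceChoices R k f), ∏ g, μ ^ #(x g) := by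
          gcongr
          intro x hx
          obtain ⟨S, hS, rfl⟩ := mem_image.1 hx
          exact Fintype.mem_piFinset.2 (piece_mem_pieceChoices hS)
      _ = μ * ∏ g, ∑ T ∈ pieceChoices R k f g, μ ^ #T := by rw [prod_univ_sum]
      _ ≤ μ * ∏ g, if g ∈ neighbors R f then 1 + a else 1 := by
          gcongr with g
          exact sum_pieceChoices_le ih f g
      _ = μ * (1 + a) ^ #(neighbors R f) := by rw [prod_ite_mem, univ_inter, prod_const]
      _ ≤ a := hKP f

theorem sum_chainConnected_mem_le [Std.Symm R] {μ a : ℝ} (hμ : 0 ≤ μ) (ha : 0 ≤ a)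
    (hKP : ∀ f, μ * (1 + a) ^ #(neighbors R f) ≤ a) (f : ι) :
    ∑ S ∈ univ.filter (fun S => ChainConnected R S ∧ f ∈ S), μ ^ #S ≤ a := by
  convert sum_connectedSetsThrough_le hμ ha hKP (Fintype.card ι) f using 2
  simp [connectedSetsThrough, card_le_univ]

end ClusterBound

section Hypergraph

variable {edge : Eg → Finset V}

def Meets (edge : Eg → Finset V) (x y : Eg) : Prop :=
  (edge x ∩ edge y).Nonempty

instance : Std.Symm (Meets edge) :=
  ⟨fun _ _ h => by rwa [Meets, inter_comm]⟩

variable [Fintype Eg]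

theorem degree_eq_card_filter {α β : Type*} [DecidableEq α] [Fintype β] (edge : β → Finset α) (v : α) :
    degree edge v = #(univ.filter fun e => v ∈ edge e) := by
  rw [degree, Nat.card_eq_fintype_card, Fintype.card_subtype]

/-- An edge meets at most `Δ - 1` other edges at each of its at most `r` vertices. -/
theorem card_neighbors_le {Δ r : ℤ} (hΔ : 1 ≤ Δ) (hdeg : ∀ v, (degree edge v : ℤ) ≤ Δ)
    (hrank : ∀ e, (#(edge e) : ℤ) ≤ r) (f : Eg) :
    (#(neighbors (Meets edge) f) : ℤ) ≤ r * (Δ - 1) := by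
  set inc : V → Finset Eg := fun u => (univ.filter fun e => u ∈ edge e).erase f
  have hsub : neighbors (Meets edge) f ⊆ (edge f).biUnion inc := by
    intro g hg
    obtain ⟨-, hgf, u, hu⟩ := mem_filter.1 hg
    exact mem_biUnion.2 ⟨u, (mem_inter.1 hu).1,
      mem_erase.2 ⟨hgf, mem_filter.2 ⟨mem_univ _, (mem_inter.1 hu).2⟩⟩⟩
  have hinc : ∀ u ∈ edge f, (#(inc u) : ℤ) ≤ Δ - 1 := fun u hu => by
    have hfu : f ∈ univ.filter fun e => u ∈ edge e := mem_filter.2 ⟨mem_univ _, hu⟩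
    rw [card_erase_of_mem hfu, Nat.cast_sub (one_le_card.2 ⟨f, hfu⟩), ← degree_eq_card_filter,
      Nat.cast_one]
    linarith [hdeg u]
  calc (#(neighbors (Meets edge) f) : ℤ)
      ≤ ∑ u ∈ edge f, (#(inc u) : ℤ) := by
        exact_mod_cast (card_le_card hsub).trans card_biUnion_le
    _ ≤ ∑ _u ∈ edge f, (Δ - 1) := sum_le_sum hinc
    _ = #(edge f) * (Δ - 1) := by rw [sum_const, nsmul_eq_mul]
    _ ≤ r * (Δ - 1) := mul_le_mul_of_nonneg_right (hrank f) (by linarith)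

/-- Each piece left after deleting `f` from a polymer meets `edge f`, so it adds at most
`r - 1` new vertices per edge. -/
theorem card_vertexSet_le {r : ℤ} (hrank : ∀ e, (#(edge e) : ℤ) ≤ r) {S : Finset Eg}
    (hS : ConnectedSub edge S) : (#(vertexSet edge S) : ℤ) ≤ (r - 1) * #S + 1 := by
  induction S using Finset.strongInduction with
  | H S ih =>
  have hS' : ChainConnected (Meets edge) S := hS
  obtain ⟨f, hf⟩ := hS.1
  set P := piece (Meets edge) f S
  have hV : vertexSet edge S ⊆ edge f ∪ univ.biUnion fun g => vertexSet edge (P g) \ edge f := by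
    intro u hu
    rw [← insert_biUnion_piece hS' hf, vertexSet, biUnion_insert] at hu
    simp only [mem_union, mem_biUnion, mem_univ, true_and, mem_sdiff, vertexSet] at hu ⊢
    tauto
  have hpiece : ∀ g, (#(vertexSet edge (P g) \ edge f) : ℤ) ≤ (r - 1) * #(P g) := by
    intro g
    rcases piece_eq_empty_or (R := Meets edge) (f := f) (S := S) (g := g)
      with hempty | ⟨hconn, hg, u, hu⟩
    · simp [P, hempty, vertexSet]
    · have hmeet : 0 < #(vertexSet edge (P g) ∩ edge f) :=
        card_pos.2 ⟨u, mem_inter.2 ⟨mem_biUnion.2 ⟨g, hg, (mem_inter.1 hu).2⟩, (mem_inter.1 hu).1⟩⟩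
      have hsplit := card_sdiff_add_card_inter (vertexSet edge (P g)) (edge f)
      have := ih (P g) (piece_subset.trans_ssubset (erase_ssubset hf)) hconn
      omega
  calc (#(vertexSet edge S) : ℤ)
      ≤ #(edge f) + ∑ g, (#(vertexSet edge (P g) \ edge f) : ℤ) := by
        exact_mod_cast (card_le_card hV).trans
          ((card_union_le _ _).trans (Nat.add_le_add_left card_biUnion_le _))
    _ ≤ r + ∑ g, (r - 1) * #(P g) := add_le_add (hrank f) (sum_le_sum fun g _ => hpiece g)
    _ = (r - 1) * #S + 1 := by
        rw [← mul_sum, ← sum_card_piece_add_one hS' hf]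
        push_cast
        ring

theorem sum_connectedSub_mem_vertexSet_le {G : Finset Eg → ℝ} (hG : ∀ γ, 0 ≤ G γ) {a : ℝ}
    (ha : ∀ e, ∑ γ ∈ univ.filter (fun γ => ConnectedSub edge γ ∧ e ∈ γ), G γ ≤ a) (v : V) :
    ∑ γ ∈ univ.filter (fun γ => ConnectedSub edge γ ∧ v ∈ vertexSet edge γ), G γ ≤
      degree edge v * a := by
  set Ev := univ.filter fun e => v ∈ edge e
  calc ∑ γ ∈ univ.filter (fun γ => ConnectedSub edge γ ∧ v ∈ vertexSet edge γ), G γ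
      ≤ ∑ γ ∈ univ.filter (fun γ => ConnectedSub edge γ ∧ v ∈ vertexSet edge γ),
          ∑ _e ∈ Ev.filter (· ∈ γ), G γ := by
        refine sum_le_sum fun γ hγ => ?_
        obtain ⟨e, heγ, hve⟩ := mem_biUnion.1 (mem_filter.1 hγ).2.2
        exact single_le_sum (f := fun _ => G γ) (fun _ _ => hG γ)
          (mem_filter.2 ⟨mem_filter.2 ⟨mem_univ _, hve⟩, heγ⟩)
    _ = ∑ e ∈ Ev, ∑ γ ∈ univ.filter (fun γ => ConnectedSub edge γ ∧ v ∈ vertexSet edge γ ∧ e ∈ γ),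
          G γ := by
        refine sum_comm' fun γ e => ?_
        simp only [mem_filter, mem_univ, true_and, Ev, vertexSet, mem_biUnion]
        grind
    _ ≤ ∑ _e ∈ Ev, a := by
        refine sum_le_sum fun e _ => le_trans (sum_le_sum_of_subset_of_nonneg ?_ ?_) (ha e)
        · intro γ
          simp only [mem_filter, mem_univ, true_and]
          exact fun h => ⟨h.1, h.2.2⟩
        · exact fun γ _ _ => hG γ
    _ = degree edge v * a := by rw [sum_const, nsmul_eq_mul, degree_eq_card_filter]

end Hypergraph

section Numerics

open Real

theorem two_le_exp_three_quarters : (2 : ℝ) ≤ exp (3 / 4) := by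
  rw [← log_le_iff_le_exp two_pos]
  linarith [log_two_lt_d9]

theorem exp_neg_half_le : exp (-(1 / 2)) ≤ (3 / 4 : ℝ) := by
  rw [exp_neg, inv_le_comm₀ (exp_pos _) (by norm_num)]
  linarith [add_one_le_exp (1 / 2 : ℝ)]

theorem kp_condition_of_le {Δ r : ℝ} (hΔ : 0 < Δ) (hr : 2 ≤ r) {n : ℕ}
    (hn : (n : ℝ) ≤ r * (Δ - 1)) :
    exp 1 * (1 / (exp 1 ^ 3 * Δ * (r * (r - 1) / 2))) *
        (1 + exp (-(1 / 2)) / (2 * Δ * (r - 1))) ^ n ≤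
      exp (-(1 / 2)) / (2 * Δ * (r - 1)) := by
  have hr1 : 0 < r - 1 := by linarith
  set a := exp (-(1 / 2)) / (2 * Δ * (r - 1))
  have ha : 0 ≤ a := by positivity
  have han : n * a ≤ 3 / 4 := calc
    n * a ≤ 2 * Δ * (r - 1) * a := by gcongr; nlinarith
    _ = exp (-(1 / 2)) := mul_div_cancel₀ _ (by positivity)
    _ ≤ 3 / 4 := exp_neg_half_le
  have hpow : (1 + a) ^ n ≤ exp (3 / 4) := calc
    (1 + a) ^ n ≤ exp a ^ n := by gcongr; linarith [add_one_le_exp a]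
    _ = exp (n * a) := (exp_nat_mul a n).symm
    _ ≤ exp (3 / 4) := exp_le_exp.2 han
  -- with `E = e^{1/4}` the remaining inequality reads `4 ≤ E^3 r`
  set E := exp (1 / 4)
  have hE : 0 < E := exp_pos _
  have he : exp 1 = E ^ 4 := by rw [← exp_nat_mul]; norm_num
  have he34 : exp (3 / 4) = E ^ 3 := by rw [← exp_nat_mul]; norm_num
  have he12 : exp (-(1 / 2)) = (E ^ 2)⁻¹ := by rw [← exp_nat_mul, ← exp_neg]; norm_num
  have hE3 : 2 ≤ E ^ 3 := he34 ▸ two_le_exp_three_quarters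
  calc exp 1 * (1 / (exp 1 ^ 3 * Δ * (r * (r - 1) / 2))) * (1 + a) ^ n
      ≤ exp 1 * (1 / (exp 1 ^ 3 * Δ * (r * (r - 1) / 2))) * exp (3 / 4) := by gcongr
    _ ≤ a := by
      simp only [a, he, he34, he12]
      field_simp
      nlinarith

theorem exp_half_le_of_le {r x : ℝ} (hr : 1 < r) {m : ℕ} (hx : x ≤ (r - 1) * m + 1) :
    exp (1 / 2 * (x / (r - 1) + m)) ≤ exp (1 / (2 * (r - 1))) * exp 1 ^ m := by
  have hr1 : 0 < r - 1 := by linarith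
  have hdiv : x / (r - 1) ≤ m + 1 / (r - 1) := by
    rw [div_le_iff₀ hr1, add_mul, one_div_mul_cancel hr1.ne']
    linarith
  rw [← exp_nat_mul, mul_one, ← exp_add, exp_le_exp]
  calc 1 / 2 * (x / (r - 1) + m) ≤ 1 / 2 * (m + 1 / (r - 1) + m) := by gcongr
    _ = 1 / (2 * (r - 1)) + m := by field_simp; ring

theorem exp_mul_mul_exp_neg_half_div_le {Δ r : ℝ} (hΔ : 0 < Δ) (hr : 2 ≤ r) :
    exp (1 / (2 * (r - 1))) * (Δ * (exp (-(1 / 2)) / (2 * Δ * (r - 1)))) ≤ 1 / (2 * (r - 1)) := by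
  have hr1 : 0 < r - 1 := by linarith
  have hexp : exp (1 / (2 * (r - 1))) * exp (-(1 / 2)) ≤ 1 := by
    rw [← exp_add, exp_le_one_iff]
    linarith [one_div_le_one_div_of_le two_pos (by linarith : (2 : ℝ) ≤ 2 * (r - 1))]
  calc exp (1 / (2 * (r - 1))) * (Δ * (exp (-(1 / 2)) / (2 * Δ * (r - 1))))
      = exp (1 / (2 * (r - 1))) * exp (-(1 / 2)) / (2 * (r - 1)) := by field_simp
    _ ≤ 1 / (2 * (r - 1)) := by gcongr

end Numerics

theorem kotecky_preiss_condition_general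
    [Fintype Eg] (Δ r : ℤ) (hΔ : 2 ≤ Δ) (hr : 2 ≤ r)
    (edge : Eg → Finset V)
    (hdeg : ∀ v : V, (degree edge v : ℤ) ≤ Δ)
    (hrank : ∀ e : Eg, ((edge e).card : ℤ) ≤ r)
    (w : Finset Eg → ℂ)
    (hw : ∀ γ : Finset Eg, ConnectedSub edge γ →
      ‖w γ‖ ≤
        (1 / (Real.exp 1 ^ 3 * Δ * ((r : ℝ) * (r - 1) / 2))) ^ γ.card)
    (v : V) :
    ∑ γ ∈ Finset.univ.filter
        (fun γ : Finset Eg => ConnectedSub edge γ ∧ v ∈ vertexSet edge γ),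
      ‖w γ‖ *
        Real.exp ((1 / 2) *
          (((vertexSet edge γ).card : ℝ) / (r - 1) + (γ.card : ℝ))) ≤
      1 / (2 * ((r : ℝ) - 1)) := by
  have hrR : (2 : ℝ) ≤ r := by exact_mod_cast hr
  have hΔR : (0 : ℝ) < Δ := by exact_mod_cast (by omega : 0 < Δ)
  have hr1 : (0 : ℝ) < r - 1 := by linarith
  set q := 1 / (Real.exp 1 ^ 3 * Δ * ((r : ℝ) * (r - 1) / 2))
  set a := Real.exp (-(1 / 2)) / (2 * Δ * ((r : ℝ) - 1))
  set P := Real.exp (1 / (2 * ((r : ℝ) - 1)))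
  have ha : 0 ≤ a := by positivity
  have hcluster : ∀ e, ∑ γ ∈ univ.filter (fun γ => ConnectedSub edge γ ∧ e ∈ γ),
      (Real.exp 1 * q) ^ #γ ≤ a :=
    sum_chainConnected_mem_le (R := Meets edge) (by positivity) ha fun f =>
      kp_condition_of_le hΔR hrR (by exact_mod_cast card_neighbors_le (by omega) hdeg hrank f)
  have hterm : ∀ γ, ConnectedSub edge γ →
      ‖w γ‖ * Real.exp (1 / 2 * (#(vertexSet edge γ) / ((r : ℝ) - 1) + #γ)) ≤
        P * (Real.exp 1 * q) ^ #γ := fun γ hγ => calc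
    _ ≤ q ^ #γ * (P * Real.exp 1 ^ #γ) := by
      gcongr
      · exact hw γ hγ
      · exact exp_half_le_of_le (by linarith) (by exact_mod_cast card_vertexSet_le hrank hγ)
    _ = P * (Real.exp 1 * q) ^ #γ := by ring
  calc _ ≤ ∑ γ ∈ univ.filter (fun γ => ConnectedSub edge γ ∧ v ∈ vertexSet edge γ),
        P * (Real.exp 1 * q) ^ #γ := sum_le_sum fun γ hγ => hterm γ (mem_filter.1 hγ).2.1
    _ ≤ P * (degree edge v * a) := by
        rw [← mul_sum]
        gcongr
        exact sum_connectedSub_mem_vertexSet_le (fun _ => by positivity) hcluster v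
    _ ≤ P * (Δ * a) := by gcongr; exact_mod_cast hdeg v
    _ ≤ 1 / (2 * ((r : ℝ) - 1)) := exp_mul_mul_exp_neg_half_div_le hΔR hrR

/-- The Kotecký–Preiss condition verified in Lemma 3 of the paper: if every polymer
weight satisfies `|w_γ| ≤ (1/(e³·Δ·C(r,2)))^{‖γ‖}`, then for every vertex `v`,
`Σ_{γ : v ∈ V(γ)} |w_γ|·exp((1/2)(|γ|/(r−1) + ‖γ‖)) ≤ 1/(2(r−1))`. -/
theorem kotecky_preiss_condition
    [Fintype Eg] (Δ r : ℤ) (hΔ : 2 ≤ Δ) (hr : 2 ≤ r)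
    (edge : Eg → Finset V)
    (hne : ∀ e : Eg, (edge e).Nonempty)
    (hdeg : ∀ v : V, (degree edge v : ℤ) ≤ Δ)
    (hrank : ∀ e : Eg, ((edge e).card : ℤ) ≤ r)
    (w : Finset Eg → ℂ)
    (hw : ∀ γ : Finset Eg, ConnectedSub edge γ →
      ‖w γ‖ ≤
        (1 / (Real.exp 1 ^ 3 * Δ * ((r : ℝ) * (r - 1) / 2))) ^ γ.card)
    (v : V) :
    ∑ γ ∈ Finset.univ.filter
        (fun γ : Finset Eg => ConnectedSub edge γ ∧ v ∈ vertexSet edge γ),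
      ‖w γ‖ *
        Real.exp ((1 / 2) *
          (((vertexSet edge γ).card : ℝ) / (r - 1) + (γ.card : ℝ))) ≤
      1 / (2 * ((r : ℝ) - 1)) :=
  kotecky_preiss_condition_general Δ r hΔ hr edge hdeg hrank w hw v

end Stmt3
end

section
/- Let G = (V, E) be a finite multigraph with an interaction φ : E → ℝ, and let β ∈ ℂ. Define Z_Ising(G;β) = 2^{−|V|} Σ_{σ ∈ {−1,+1}^V} Π_{ε={u,v} ∈ E} e^{−β φ(ε) σ_u σ_v}. Then Z_Ising(G;β) = Σ_{S ⊆ E} Π_{γ ∈ comp(S)} w_γ, where comp(S) denotes the set of connected components of the subgraph with edge set S (and vertex set the union of the endpoints of edges in S), and for a connected subgraph γ, w_γ = 2^{−|V(γ)|} Σ_{σ ∈ {−1,+1}^{V(γ)}} Π_{{u,v} ∈ E(γ)} ( e^{−β φ({u,v}) σ_u σ_v} − 1 ). The empty edge set S = ∅ contributes 1. -/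
open scoped Classical

namespace Stmt6

variable {V Eg : Type*}

/-- The spin `±1` associated to a Boolean configuration value. -/
def spin (b : Bool) : ℝ := if b then 1 else -1

/-- The product `σ_u σ_v` of the spins at the two endpoints of an (unordered) edge. -/
def spinProd (σ : V → Bool) : Sym2 V → ℝ :=
  Sym2.lift ⟨fun u v => spin (σ u) * spin (σ v), fun _ _ => mul_comm _ _⟩

/-- The normalized Ising partition function
`Z_Ising(G;β) = 2^{−|V|} Σ_{σ ∈ {−1,+1}^V} Π_{ε={u,v} ∈ E} e^{−β φ(ε) σ_u σ_v}`. -/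
noncomputable def Zising [Fintype V] [Fintype Eg]
    (ends : Eg → Sym2 V) (φ : Eg → ℝ) (β : ℂ) : ℂ :=
  (2 : ℂ) ^ (-(Fintype.card V : ℤ)) *
    ∑ σ : V → Bool, ∏ e : Eg, Complex.exp (-β * (φ e : ℂ) * (spinProd σ (ends e) : ℝ))

/-- The vertex set of the subgraph determined by a set `S` of edges. -/
noncomputable def vertexSet [Fintype V] (ends : Eg → Sym2 V) (S : Finset Eg) : Finset V :=
  Finset.univ.filter (fun v => ∃ e ∈ S, v ∈ ends e)

/-- The subgraph determined by `S` is connected: `S` is nonempty and any two edges of `S`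
are joined by a chain of edges of `S` in which consecutive edges share a vertex. -/
def ConnectedSub (ends : Eg → Sym2 V) (S : Finset Eg) : Prop :=
  S.Nonempty ∧ ∀ a ∈ S, ∀ b ∈ S,
    Relation.ReflTransGen (fun x y => x ∈ S ∧ y ∈ S ∧ ∃ v, v ∈ ends x ∧ v ∈ ends y) a b

/-- `T` is a (maximal) connected component of the subgraph determined by `S`. -/
def IsComponent (ends : Eg → Sym2 V) (S T : Finset Eg) : Prop :=
  T ⊆ S ∧ ConnectedSub ends T ∧
    ∀ T' : Finset Eg, T ⊆ T' → T' ⊆ S → ConnectedSub ends T' → T' = T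

/-- The set `comp(S)` of maximal connected components of the subgraph determined by `S`. -/
noncomputable def comp [Fintype Eg] (ends : Eg → Sym2 V) (S : Finset Eg) : Finset (Finset Eg) :=
  Finset.univ.filter (fun T => IsComponent ends S T)

/-- The polymer weight
`w_γ = 2^{−|V(γ)|} Σ_{σ ∈ {−1,+1}^{V(γ)}} Π_{{u,v} ∈ E(γ)} (e^{−β φ({u,v}) σ_u σ_v} − 1)`. -/
noncomputable def weight [Fintype V] (ends : Eg → Sym2 V) (φ : Eg → ℝ) (β : ℂ)
    (γ : Finset Eg) : ℂ :=
  (2 : ℂ) ^ (-((vertexSet ends γ).card : ℤ)) *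
    ∑ σ : {v : V // v ∈ vertexSet ends γ} → Bool, ∏ e ∈ γ,
      (Complex.exp (-β * (φ e : ℂ) *
        (spinProd (fun v => if h : v ∈ vertexSet ends γ then σ ⟨v, h⟩ else false)
          (ends e) : ℝ)) - 1)

/-!
Write each Boltzmann factor as `1 + (e^{-βφσσ} - 1)` and expand the product over edges:
`Z = Σ_S 2^{-|V|} Σ_σ Π_{e ∈ S} (e^{-βφσσ} - 1)`. The summand of `S` only involves the spins on
`V(S)`, so its normalised spin sum may be taken over `V(S)` alone, which gives `w_S`. Spin sums
over vertex-disjoint edge sets factor, and the components of `S` are pairwise vertex-disjoint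
and cover `S`, hence `w_S = Π_{γ ∈ comp(S)} w_γ`.
-/

section ConfigurationSums

variable {ι α R : Type*} [Fintype ι] [Fintype α] [CommSemiring R]

/- Exchanging two configurations on `A` is a bijection of pairs `(σ, τ)`; it turns
`F σ * G τ` into `F σ' * G σ'` because `F` only sees `A` and `G` only sees the complement. -/
theorem sum_mul_sum_of_dependsOn_disjoint {F G : (ι → α) → R} {A B : Finset ι}
    (hF : DependsOn F (A : Set ι)) (hG : DependsOn G (B : Set ι)) (hAB : Disjoint A B) :
    (∑ σ, F σ) * (∑ σ, G σ) = Fintype.card (ι → α) * ∑ σ, F σ * G σ := by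
  classical
  let swap : Equiv.Perm ((ι → α) × (ι → α)) :=
    Function.Involutive.toPerm (fun p => (A.piecewise p.1 p.2, A.piecewise p.2 p.1))
      fun p => by
        simp [Finset.piecewise_idem_left, Finset.piecewise_idem_right, Finset.piecewise_same]
  have hswap : ∀ p : (ι → α) × (ι → α), F (swap p).1 * G (swap p).1 = F p.1 * G p.2 := by
    rintro ⟨σ, τ⟩
    congr 1
    · exact hF fun v hv => Finset.piecewise_eq_of_mem _ _ _ hv
    · exact hG fun v hv =>
        Finset.piecewise_eq_of_notMem _ _ _ (Finset.disjoint_right.mp hAB hv)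
  calc (∑ σ, F σ) * (∑ σ, G σ) = ∑ p : (ι → α) × (ι → α), F p.1 * G p.2 := by
        rw [Finset.sum_mul_sum, Fintype.sum_prod_type]
    _ = ∑ p : (ι → α) × (ι → α), F p.1 * G p.1 := by
        rw [← Equiv.sum_comp swap (fun p => F p.1 * G p.1)]
        exact Finset.sum_congr rfl fun p _ => (hswap p).symm
    _ = Fintype.card (ι → α) * ∑ σ, F σ * G σ := by
        simp [Fintype.sum_prod_type, Finset.mul_sum]

theorem card_mul_sum_of_dependsOn {F : (ι → α) → R} {A : Finset ι}
    (hF : DependsOn F (A : Set ι)) (a : α) :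
    Fintype.card (A → α) * ∑ σ, F σ =
      Fintype.card (ι → α) * ∑ τ : A → α, F (fun v => if h : v ∈ A then τ ⟨v, h⟩ else a) := by
  classical
  let e := Equiv.piEquivPiSubtypeProd (· ∈ A) (fun _ => α)
  have hsplit : ∑ σ, F σ =
      Fintype.card ({v // v ∉ A} → α) *
        ∑ τ : A → α, F (fun v => if h : v ∈ A then τ ⟨v, h⟩ else a) := by
    rw [← e.symm.sum_comp, Fintype.sum_prod_type, Finset.mul_sum]
    refine Finset.sum_congr rfl fun τ _ => ?_
    rw [← Finset.card_univ, ← nsmul_eq_mul, ← Finset.sum_const]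
    exact Finset.sum_congr rfl fun ρ _ =>
      hF fun v hv => by simp [e, Equiv.piEquivPiSubtypeProd, Finset.mem_coe.mp hv]
  rw [hsplit, Fintype.card_congr e, Fintype.card_prod]
  push_cast
  ring

end ConfigurationSums

section Components

variable (ends : Eg → Sym2 V)

-- `ConnectedSub ends S` is reachability under `EdgeAdj ends S`, up to unfolding.
def EdgeAdj (S : Finset Eg) (x y : Eg) : Prop :=
  x ∈ S ∧ y ∈ S ∧ ∃ v, v ∈ ends x ∧ v ∈ ends y

instance (S : Finset Eg) : Std.Symm (EdgeAdj ends S) :=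
  ⟨fun _ _ ⟨hx, hy, v, hvx, hvy⟩ => ⟨hy, hx, v, hvy, hvx⟩⟩

variable {ends}

theorem reflTransGen_edgeAdj_mono {S S' : Finset Eg} (h : S ⊆ S') {a b : Eg}
    (hab : Relation.ReflTransGen (EdgeAdj ends S) a b) :
    Relation.ReflTransGen (EdgeAdj ends S') a b :=
  Relation.ReflTransGen.mono (fun _ _ ⟨hx, hy, hv⟩ => ⟨h hx, h hy, hv⟩) _ _ hab

theorem ConnectedSub.union {T T' : Finset Eg} (hT : ConnectedSub ends T)
    (hT' : ConnectedSub ends T') {e f : Eg} (he : e ∈ T) (hf : f ∈ T') {v : V}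
    (hve : v ∈ ends e) (hvf : v ∈ ends f) : ConnectedSub ends (T ∪ T') := by
  have hef : EdgeAdj ends (T ∪ T') e f :=
    ⟨Finset.mem_union_left _ he, Finset.mem_union_right _ hf, v, hve, hvf⟩
  have hreach : ∀ c ∈ T ∪ T', Relation.ReflTransGen (EdgeAdj ends (T ∪ T')) c e := by
    intro c hc
    rcases Finset.mem_union.mp hc with hc | hc
    · exact reflTransGen_edgeAdj_mono Finset.subset_union_left (hT.2 c hc e he)
    · exact (reflTransGen_edgeAdj_mono Finset.subset_union_right (hT'.2 c hc f hf)).tail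
        (Std.Symm.symm _ _ hef)
  exact ⟨⟨e, Finset.mem_union_left _ he⟩, fun a ha b hb =>
    (hreach a ha).trans (Std.Symm.symm _ _ (hreach b hb))⟩

theorem IsComponent.eq_of_mem_ends {S T T' : Finset Eg} (hT : IsComponent ends S T)
    (hT' : IsComponent ends S T') {e f : Eg} (he : e ∈ T) (hf : f ∈ T') {v : V}
    (hve : v ∈ ends e) (hvf : v ∈ ends f) : T = T' := by
  have hU := hT.2.1.union hT'.2.1 he hf hve hvf
  have hUS : T ∪ T' ⊆ S := Finset.union_subset hT.1 hT'.1
  exact (hT.2.2 _ Finset.subset_union_left hUS hU).symm.trans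
    (hT'.2.2 _ Finset.subset_union_right hUS hU)

/-- The component of `e` consists of the edges of `S` reachable from `e`. -/
theorem exists_isComponent_mem {S : Finset Eg} {e : Eg} (he : e ∈ S) :
    ∃ T, IsComponent ends S T ∧ e ∈ T := by
  classical
  set T := S.filter (Relation.ReflTransGen (EdgeAdj ends S) e)
  have heT : e ∈ T := Finset.mem_filter.mpr ⟨he, .refl⟩
  have hreach : ∀ x, Relation.ReflTransGen (EdgeAdj ends S) e x →
      Relation.ReflTransGen (EdgeAdj ends T) e x := by
    intro x hx
    induction hx with
    | refl => exact .refl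
    | tail hey hyz ih =>
      exact ih.tail ⟨Finset.mem_filter.mpr ⟨hyz.1, hey⟩,
        Finset.mem_filter.mpr ⟨hyz.2.1, hey.tail hyz⟩, hyz.2.2⟩
  refine ⟨T, ⟨Finset.filter_subset _ _, ⟨⟨e, heT⟩, fun a ha b hb => ?_⟩,
    fun T' hTT' hT'S hT' => ?_⟩, heT⟩
  · exact (Std.Symm.symm _ _ (hreach a (Finset.mem_filter.mp ha).2)).trans
      (hreach b (Finset.mem_filter.mp hb).2)
  · refine Finset.Subset.antisymm (fun x hx => Finset.mem_filter.mpr ⟨hT'S hx, ?_⟩) hTT'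
    exact reflTransGen_edgeAdj_mono hT'S (hT'.2 e (hTT' heT) x hx)

theorem mem_comp [Fintype Eg] {S T : Finset Eg} : T ∈ comp ends S ↔ IsComponent ends S T := by
  simp [comp]

theorem biUnion_comp [Fintype Eg] (S : Finset Eg) : (comp ends S).biUnion id = S := by
  ext e
  simp only [Finset.mem_biUnion, id, mem_comp]
  constructor
  · rintro ⟨T, hT, he⟩
    exact hT.1 he
  · intro he
    exact exists_isComponent_mem he

theorem mem_vertexSet [Fintype V] {S : Finset Eg} {v : V} :
    v ∈ vertexSet ends S ↔ ∃ e ∈ S, v ∈ ends e := by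
  simp [vertexSet]

theorem pairwiseDisjoint_vertexSet_comp [Fintype V] [Fintype Eg] (S : Finset Eg) :
    (comp ends S : Set (Finset Eg)).PairwiseDisjoint (vertexSet ends) := by
  intro T hT T' hT' hne
  refine Finset.disjoint_left.mpr fun v hv hv' => hne ?_
  obtain ⟨e, he, hve⟩ := mem_vertexSet.mp hv
  obtain ⟨f, hf, hvf⟩ := mem_vertexSet.mp hv'
  exact (mem_comp.mp hT).eq_of_mem_ends (mem_comp.mp hT') he hf hve hvf

end Components

section Weight

variable (ends : Eg → Sym2 V) (φ : Eg → ℝ) (β : ℂ)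

noncomputable def boltzmannFactor (σ : V → Bool) (e : Eg) : ℂ :=
  Complex.exp (-β * (φ e : ℂ) * (spinProd σ (ends e) : ℝ))

theorem spinProd_congr {σ σ' : V → Bool} {z : Sym2 V} (h : ∀ v ∈ z, σ v = σ' v) :
    spinProd σ z = spinProd σ' z := by
  induction z using Sym2.ind with
  | _ u v => simp [spinProd, h u (Sym2.mem_mk_left u v), h v (Sym2.mem_mk_right u v)]

variable [Fintype V]

theorem dependsOn_prod_boltzmannFactor_sub_one (S : Finset Eg) :
    DependsOn (fun σ => ∏ e ∈ S, (boltzmannFactor ends φ β σ e - 1))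
      (vertexSet ends S : Set V) := fun σ σ' h =>
  Finset.prod_congr rfl fun e he => by
    rw [boltzmannFactor, boltzmannFactor,
      spinProd_congr fun v hv => h v (mem_vertexSet.mpr ⟨e, he, hv⟩)]

theorem weight_eq_average (S : Finset Eg) :
    weight ends φ β S =
      (2 : ℂ) ^ (-(Fintype.card V : ℤ)) * ∑ σ, ∏ e ∈ S, (boltzmannFactor ends φ β σ e - 1) := by
  have h := card_mul_sum_of_dependsOn (dependsOn_prod_boltzmannFactor_sub_one ends φ β S) false
  simp only [Fintype.card_fun, Fintype.card_bool, Fintype.card_coe] at h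
  push_cast at h
  simp only [weight, ← boltzmannFactor.eq_1, zpow_neg, zpow_natCast]
  field_simp
  linear_combination h.symm

theorem weight_union {A B : Finset Eg} (hAB : Disjoint (vertexSet ends A) (vertexSet ends B)) :
    weight ends φ β (A ∪ B) = weight ends φ β A * weight ends φ β B := by
  have hdisj : Disjoint A B := Finset.disjoint_left.mpr fun e heA heB =>
    Finset.disjoint_left.mp hAB (mem_vertexSet.mpr ⟨e, heA, Sym2.out_fst_mem _⟩)
      (mem_vertexSet.mpr ⟨e, heB, Sym2.out_fst_mem _⟩)
  have h := sum_mul_sum_of_dependsOn_disjoint (dependsOn_prod_boltzmannFactor_sub_one ends φ β A)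
    (dependsOn_prod_boltzmannFactor_sub_one ends φ β B) hAB
  simp only [Fintype.card_fun, Fintype.card_bool, ← Finset.prod_union hdisj] at h
  simp only [weight_eq_average, zpow_neg, zpow_natCast]
  push_cast at h
  field_simp
  linear_combination h.symm

theorem weight_empty : weight ends φ β ∅ = 1 := by
  simp [weight_eq_average]

theorem vertexSet_biUnion {ι : Type*} (P : Finset ι) (f : ι → Finset Eg) :
    vertexSet ends (P.biUnion f) = P.biUnion fun i => vertexSet ends (f i) := by
  ext v
  simp only [mem_vertexSet, Finset.mem_biUnion]
  tauto

theorem weight_biUnion (P : Finset (Finset Eg))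
    (hP : (P : Set (Finset Eg)).PairwiseDisjoint (vertexSet ends)) :
    weight ends φ β (P.biUnion id) = ∏ γ ∈ P, weight ends φ β γ := by
  classical
  induction P using Finset.induction_on with
  | empty => simp [weight_empty]
  | insert γ P hγ ih =>
    rw [Finset.coe_insert] at hP
    have hdisj : Disjoint (vertexSet ends γ) (vertexSet ends (P.biUnion id)) := by
      rw [vertexSet_biUnion, Finset.disjoint_biUnion_right]
      exact fun γ' hγ' => hP (Set.mem_insert _ _) (Set.mem_insert_of_mem _ hγ')
        (ne_of_mem_of_not_mem hγ' hγ).symm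
    rw [Finset.biUnion_insert, id, weight_union ends φ β hdisj,
      ih (hP.subset (Set.subset_insert _ _)), Finset.prod_insert hγ]

theorem weight_eq_prod_comp [Fintype Eg] (S : Finset Eg) :
    weight ends φ β S = ∏ γ ∈ comp ends S, weight ends φ β γ := by
  rw [← weight_biUnion ends φ β _ (pairwiseDisjoint_vertexSet_comp S), biUnion_comp]

end Weight

theorem ising_polymer_representation_general [Fintype V] [Fintype Eg]
    (ends : Eg → Sym2 V) (φ : Eg → ℝ) (β : ℂ) :
    Zising ends φ β =
      ∑ S : Finset Eg, ∏ γ ∈ comp ends S, weight ends φ β γ := by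
  have mayer : ∀ σ : V → Bool, ∏ e, boltzmannFactor ends φ β σ e =
      ∑ S : Finset Eg, ∏ e ∈ S, (boltzmannFactor ends φ β σ e - 1) := fun σ => by
    simpa using Finset.prod_add_one (f := fun e => boltzmannFactor ends φ β σ e - 1) Finset.univ
  calc Zising ends φ β
      = (2 : ℂ) ^ (-(Fintype.card V : ℤ)) * ∑ σ, ∏ e, boltzmannFactor ends φ β σ e := rfl
    _ = ∑ S : Finset Eg, weight ends φ β S := by
      simp_rw [mayer, weight_eq_average, ← Finset.mul_sum]
      rw [Finset.sum_comm]
    _ = ∑ S : Finset Eg, ∏ γ ∈ comp ends S, weight ends φ β γ := by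
      simp_rw [← weight_eq_prod_comp]

/-- **Lemma 5 of the paper.** The Ising model partition function admits the abstract
polymer model representation `Z_Ising(G;β) = Σ_{S ⊆ E} Π_{γ ∈ comp(S)} w_γ`. -/
theorem ising_polymer_representation [Fintype V] [Fintype Eg]
    (ends : Eg → Sym2 V) (hloop : ∀ e : Eg, ¬ (ends e).IsDiag)
    (φ : Eg → ℝ) (β : ℂ) :
    Zising ends φ β =
      ∑ S : Finset Eg, ∏ γ ∈ comp ends S, weight ends φ β γ :=
  ising_polymer_representation_general ends φ β

end Stmt6
end

section
/- Let G = (V, E) be a multihypergraph whose edge set E is linearly ordered, with a finite-dimensional Hilbert space H_v = ℂ^{d_v} at each vertex and a unitary operator U_ε on H_ε = ⨂_{v∈ε} H_v assigned to each edge ε, regarded as acting on H_G = ⨂_{v∈V} H_v by tensoring with the identity. Let U_G = Π_{ε∈E} U_ε (product taken in the order of the edge labels) and A_{U_G} = ⟨0^{|V|}| U_G |0^{|V|}⟩. Then A_{U_G} = Σ_{S ⊆ E} Π_{γ ∈ comp(S)} w_γ, where comp(S) is the set of maximal connected components of the subgraph with edge set S, and for a connected subgraph γ, w_γ = ⟨0^{|V(γ)|}|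 Π_{ε ∈ E(γ)} (U_ε − I) |0^{|V(γ)|}⟩, the product over E(γ) taken in the order of the edge labels and the operators U_ε − I regarded as acting on ⨂_{v∈V(γ)} H_v. The empty set S = ∅ contributes 1. -/
open scoped Classical Matrix

namespace Stmt9

variable {V Eg : Type*}

/-- Configurations of the qudits in a subset `T` of the vertices: the index set of a
basis of `⨂_{v∈T} ℂ^{d_v}`. -/
abbrev Loc {V : Type*} (dim : V → ℕ) (T : Finset V) : Type _ := ∀ v : T, Fin (dim v)

/-- Configurations of all qudits: the index set of a basis of `H_G = ⨂_{v∈V} ℂ^{d_v}`. -/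
abbrev Glob (dim : V → ℕ) : Type _ := ∀ v : V, Fin (dim v)

/-- The lift of an operator on `⨂_{v∈S} ℂ^{d_v}` to an operator on `⨂_{v∈T} ℂ^{d_v}`
(for `S ⊆ T`), tensoring with the identity on the qudits outside `S`. -/
noncomputable def liftMat {dim : V → ℕ} {S T : Finset V} (h : S ⊆ T)
    (A : Matrix (Loc dim S) (Loc dim S) ℂ) : Matrix (Loc dim T) (Loc dim T) ℂ :=
  fun x y => (if ∀ v : T, ↑v ∉ S → x v = y v then 1 else 0) *
    A (fun v => x ⟨v.1, h v.2⟩) (fun v => y ⟨v.1, h v.2⟩)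

/-- The lift of an operator on `⨂_{v∈S} ℂ^{d_v}` to an operator on the full space
`H_G`, tensoring with the identity elsewhere. -/
noncomputable def liftGlobal (dim : V → ℕ) (S : Finset V)
    (A : Matrix (Loc dim S) (Loc dim S) ℂ) : Matrix (Glob dim) (Glob dim) ℂ :=
  fun x y => (if ∀ v : V, v ∉ S → x v = y v then 1 else 0) *
    A (fun v => x v) (fun v => y v)

/-- The ordered product `Π_{ε ∈ S} f(ε)` of matrices, taken in the order of the edge
labels (the linear order on `Eg`). -/
noncomputable def oprod [LinearOrder Eg] {n : Type*} [Fintype n] [DecidableEq n]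
    (S : Finset Eg) (f : Eg → Matrix n n ℂ) : Matrix n n ℂ :=
  ((S.sort (· ≤ ·)).map f).prod

/-- The vertex set `V(S) = ⋃_{ε∈S} ε` of the subgraph determined by a set `S` of edges,
where `edge : Eg → Finset V` assigns to each labelled edge the set of vertices it
contains. -/
abbrev vertexSet [DecidableEq V] (edge : Eg → Finset V) (S : Finset Eg) : Finset V :=
  S.biUnion edge

/-- A subgraph determined by a set `S` of edges is connected. -/
def ConnectedSub [DecidableEq V] (edge : Eg → Finset V) (S : Finset Eg) : Prop :=
  S.Nonempty ∧ ∀ a ∈ S, ∀ b ∈ S,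
    Relation.ReflTransGen (fun x y => x ∈ S ∧ y ∈ S ∧ (edge x ∩ edge y).Nonempty) a b

/-- `T` is a maximal connected component of the subgraph determined by `S`. -/
def IsComponent [DecidableEq V] (edge : Eg → Finset V) (S T : Finset Eg) : Prop :=
  T ⊆ S ∧ ConnectedSub edge T ∧
    ∀ T' : Finset Eg, T ⊆ T' → T' ⊆ S → ConnectedSub edge T' → T' = T

/-- The set `comp(S)` of maximal connected components of the subgraph determined by `S`. -/
noncomputable def comp [DecidableEq V] [Fintype Eg] (edge : Eg → Finset V) (S : Finset Eg) :
    Finset (Finset Eg) :=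
  Finset.univ.filter (fun T => IsComponent edge S T)

/-- The polymer weight
`w_γ = ⟨0^{|V(γ)|}| Π_{ε∈E(γ)} (U_ε − I) |0^{|V(γ)|}⟩`, the product taken in the
order of the edge labels, with `U_ε − I` acting on `⨂_{v∈V(γ)} ℂ^{d_v}`. -/
noncomputable def weight [DecidableEq V] [LinearOrder Eg] (edge : Eg → Finset V)
    (dim : V → ℕ) (hd : ∀ v, 0 < dim v)
    (A : ∀ e : Eg, Matrix (Loc dim (edge e)) (Loc dim (edge e)) ℂ)
    (γ : Finset Eg) : ℂ :=
  oprod γ (fun e =>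
      if he : e ∈ γ then
        (liftMat (Finset.subset_biUnion_of_mem edge he) (A e) - 1 :
          Matrix (Loc dim (vertexSet edge γ)) (Loc dim (vertexSet edge γ)) ℂ)
      else 1)
    (fun v => ⟨0, hd v⟩) (fun v => ⟨0, hd v⟩)

/-!
Write `U_ε = 1 + (U_ε - 1)` and expand the ordered product: the amplitude becomes
`Σ_{S ⊆ E} ⟨0| Π_{ε ∈ S} (U_ε - 1) |0⟩`. For fixed `S` pick a component `γ` of `S`. The factors
indexed by `γ` act on the qudits of `V(γ)`, those indexed by `S \ γ` on the disjoint set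
`V(S \ γ)`, so the two groups commute and the ordered product splits into a `γ`-part times the
rest. Operators on disjoint sets of qudits have a factorizing diagonal matrix element at `|0⟩`,
and the `γ`-part contributes exactly `w_γ`; induction on `S` removes the components one by one.
-/

section OrderedProd

variable {ι : Type*} [LinearOrder ι]

theorem sort_insert_of_forall_lt {a : ι} {s : Finset ι} (ha : ∀ b ∈ s, a < b) :
    (insert a s).sort (· ≤ ·) = a :: s.sort (· ≤ ·) :=
  Finset.sort_insert _ (fun b hb => (ha b hb).le) fun h => lt_irrefl a (ha a h)

theorem prod_sort_one_add {R : Type*} [Semiring R] (s : Finset ι) (g : ι → R) :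
    ((s.sort (· ≤ ·)).map (fun i => 1 + g i)).prod =
      ∑ t ∈ s.powerset, ((t.sort (· ≤ ·)).map g).prod := by
  induction s using Finset.induction_on_min with
  | empty => simp
  | insert a s ha ih =>
    rw [sort_insert_of_forall_lt ha, List.map_cons, List.prod_cons, ih,
      Finset.sum_powerset_insert fun h => lt_irrefl a (ha a h), add_mul, one_mul, Finset.mul_sum]
    congr 1
    refine Finset.sum_congr rfl fun t ht => ?_
    rw [sort_insert_of_forall_lt fun b hb => ha b (Finset.mem_powerset.1 ht hb), List.map_cons,
      List.prod_cons]

theorem prod_sort_eq_mul_inter_sdiff {M : Type*} [Monoid M] (s t : Finset ι) (f : ι → M)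
    (hcomm : ∀ a ∈ s ∩ t, ∀ b ∈ s \ t, Commute (f a) (f b)) :
    ((s.sort (· ≤ ·)).map f).prod =
      (((s ∩ t).sort (· ≤ ·)).map f).prod * (((s \ t).sort (· ≤ ·)).map f).prod := by
  induction s using Finset.induction_on_min with
  | empty => simp
  | insert a s ha ih =>
    have hsub : s ⊆ insert a s := Finset.subset_insert a s
    rw [sort_insert_of_forall_lt ha, List.map_cons, List.prod_cons,
      ih fun b hb c hc => hcomm b (Finset.inter_subset_inter_right hsub hb) c
        (Finset.sdiff_subset_sdiff hsub subset_rfl hc)]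
    by_cases hat : a ∈ t
    · rw [Finset.insert_inter_of_mem hat, Finset.insert_sdiff_of_mem _ hat,
        sort_insert_of_forall_lt fun b hb => ha b (Finset.mem_inter.1 hb).1, List.map_cons,
        List.prod_cons, mul_assoc]
    · have hfa : Commute (f a) (((s ∩ t).sort (· ≤ ·)).map f).prod := by
        refine Commute.list_prod_right _ _ fun x hx => ?_
        obtain ⟨b, hb, rfl⟩ := List.mem_map.1 hx
        refine (hcomm b ?_ a ?_).symm
        · exact Finset.inter_subset_inter_right hsub ((Finset.mem_sort _).1 hb)
        · exact Finset.mem_sdiff.2 ⟨Finset.mem_insert_self a s, hat⟩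
      rw [Finset.insert_inter_of_notMem hat, Finset.insert_sdiff_of_notMem _ hat,
        sort_insert_of_forall_lt fun b hb => ha b (Finset.mem_sdiff.1 hb).1, List.map_cons,
        List.prod_cons, ← mul_assoc, hfa.eq, mul_assoc]

end OrderedProd

section Lift

variable {dim : V → ℕ}

theorem liftGlobal_apply_self (T : Finset V) (B : Matrix (Loc dim T) (Loc dim T) ℂ)
    (x : Glob dim) :
    liftGlobal dim T B x x = B (fun v : T => x v) (fun v : T => x v) := by
  simp [liftGlobal]

variable [DecidableEq V] [Fintype V]

open Matrix Kronecker in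
theorem liftGlobal_eq_submatrix_kronecker (S : Finset V)
    (B : Matrix (Loc dim S) (Loc dim S) ℂ) :
    liftGlobal dim S B =
      (B ⊗ₖ (1 : Matrix (∀ v : {v // v ∉ S}, Fin (dim v)) _ ℂ)).submatrix
        (Equiv.piEquivPiSubtypeProd (· ∈ S) _) (Equiv.piEquivPiSubtypeProd (· ∈ S) _) := by
  ext x y
  simp only [liftGlobal, submatrix_apply, kronecker_apply, one_apply, funext_iff,
    Equiv.piEquivPiSubtypeProd_apply, Subtype.forall]
  split_ifs <;> simp_all [mul_comm]

variable (dim) in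
open Matrix Kronecker in
noncomputable def liftGlobalHom (S : Finset V) :
    Matrix (Loc dim S) (Loc dim S) ℂ →+* Matrix (Glob dim) (Glob dim) ℂ where
  toFun := liftGlobal dim S
  map_one' := by
    rw [liftGlobal_eq_submatrix_kronecker, one_kronecker_one, submatrix_one_equiv]
  map_mul' B C := by
    simp only [liftGlobal_eq_submatrix_kronecker, submatrix_mul_equiv, ← mul_kronecker_mul,
      mul_one]
  map_zero' := by ext; simp [liftGlobal]
  map_add' B C := by ext; simp [liftGlobal, mul_add]

@[simp]
theorem liftGlobalHom_apply (S : Finset V) (B : Matrix (Loc dim S) (Loc dim S) ℂ) :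
    liftGlobalHom dim S B = liftGlobal dim S B := rfl

theorem liftGlobal_sub_one (S : Finset V) (B : Matrix (Loc dim S) (Loc dim S) ℂ) :
    liftGlobal dim S (B - 1) = liftGlobal dim S B - 1 := by
  rw [← liftGlobalHom_apply, map_sub, map_one, liftGlobalHom_apply]

theorem liftGlobal_liftMat {S T : Finset V} (h : S ⊆ T)
    (B : Matrix (Loc dim S) (Loc dim S) ℂ) :
    liftGlobal dim T (liftMat h B) = liftGlobal dim S B := by
  ext x y
  simp only [liftGlobal, liftMat]
  have hiff : ((∀ v ∉ T, x v = y v) ∧ ∀ v : T, ↑v ∉ S → x v = y v) ↔ ∀ v ∉ S, x v = y v :=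
    ⟨fun ⟨hT, hTS⟩ v hv => if hvT : v ∈ T then hTS ⟨v, hvT⟩ hv else hT v hvT,
      fun hS => ⟨fun v hv => hS v fun hvS => hv (h hvS), fun v => hS v⟩⟩
  split_ifs <;> simp_all

theorem liftGlobal_mul_liftGlobal_apply {T₁ T₂ : Finset V} (hdisj : Disjoint T₁ T₂)
    (B : Matrix (Loc dim T₁) (Loc dim T₁) ℂ) (C : Matrix (Loc dim T₂) (Loc dim T₂) ℂ)
    (x y : Glob dim) :
    (liftGlobal dim T₁ B * liftGlobal dim T₂ C) x y =
      (if ∀ v, v ∉ T₁ → v ∉ T₂ → x v = y v then 1 else 0) *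
        (B (fun v : T₁ => x v) (fun v : T₁ => y v) *
          C (fun v : T₂ => x v) (fun v : T₂ => y v)) := by
  set z : Glob dim := fun v => if v ∈ T₁ then y v else x v
  rw [Matrix.mul_apply, Finset.sum_eq_single z]
  · have hz₁ : (fun v : T₁ => z v) = fun v : T₁ => y v := funext fun v => if_pos v.2
    have hz₂ : (fun v : T₂ => z v) = fun v : T₂ => x v :=
      funext fun v => if_neg (Finset.disjoint_right.1 hdisj v.2)
    have hcond : (∀ v ∉ T₂, z v = y v) ↔ ∀ v, v ∉ T₁ → v ∉ T₂ → x v = y v :=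
      ⟨fun h v h₁ h₂ => by simpa [z, h₁] using h v h₂,
        fun h v h₂ => if h₁ : v ∈ T₁ then if_pos h₁ else (if_neg h₁).trans (h v h₁ h₂)⟩
    simp only [liftGlobal, hz₁, hz₂]
    rw [if_pos fun v hv => (if_neg hv).symm]
    by_cases h : ∀ v, v ∉ T₁ → v ∉ T₂ → x v = y v
    · rw [if_pos (hcond.2 h), if_pos h]; ring
    · rw [if_neg (mt hcond.1 h), if_neg h]; ring
  · intro w _ hw
    simp only [liftGlobal]
    split_ifs with h₁ h₂
    · refine absurd (funext fun v => ?_) hw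
      by_cases hv : v ∈ T₁
      · simpa [z, hv] using h₂ v (Finset.disjoint_left.1 hdisj hv)
      · simpa [z, hv] using (h₁ v hv).symm
    all_goals simp
  · exact fun h => absurd (Finset.mem_univ z) h

variable (dim) in
noncomputable abbrev localOps (T : Finset V) : Subring (Matrix (Glob dim) (Glob dim) ℂ) :=
  (liftGlobalHom dim T).range

theorem liftGlobal_mem_localOps {S T : Finset V} (h : S ⊆ T)
    (B : Matrix (Loc dim S) (Loc dim S) ℂ) : liftGlobal dim S B ∈ localOps dim T :=
  ⟨liftMat h B, liftGlobal_liftMat h B⟩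

theorem commute_of_mem_localOps {T₁ T₂ : Finset V} (hdisj : Disjoint T₁ T₂)
    {X Y : Matrix (Glob dim) (Glob dim) ℂ} (hX : X ∈ localOps dim T₁)
    (hY : Y ∈ localOps dim T₂) : Commute X Y := by
  obtain ⟨B, rfl⟩ := hX
  obtain ⟨C, rfl⟩ := hY
  ext x y
  simp only [liftGlobalHom_apply, liftGlobal_mul_liftGlobal_apply hdisj,
    liftGlobal_mul_liftGlobal_apply hdisj.symm, mul_comm (B _ _)]
  exact congrArg₂ _ (if_congr ⟨fun h v h₂ h₁ => h v h₁ h₂, fun h v h₁ h₂ => h v h₂ h₁⟩ rfl rfl) rfl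

theorem mul_apply_self_of_mem_localOps {T₁ T₂ : Finset V} (hdisj : Disjoint T₁ T₂)
    {X Y : Matrix (Glob dim) (Glob dim) ℂ} (hX : X ∈ localOps dim T₁)
    (hY : Y ∈ localOps dim T₂) (x : Glob dim) : (X * Y) x x = X x x * Y x x := by
  obtain ⟨B, rfl⟩ := hX
  obtain ⟨C, rfl⟩ := hY
  simp only [liftGlobalHom_apply]
  rw [liftGlobal_mul_liftGlobal_apply hdisj, if_pos fun _ _ _ => rfl, one_mul,
    liftGlobal_apply_self, liftGlobal_apply_self]

end Lift

section Graph

variable [DecidableEq V] {edge : Eg → Finset V}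

variable (edge) in
abbrev EdgeAdj (S : Finset Eg) (a b : Eg) : Prop :=
  a ∈ S ∧ b ∈ S ∧ (edge a ∩ edge b).Nonempty

theorem EdgeAdj.reflTransGen_symm {S : Finset Eg} {a b : Eg}
    (h : Relation.ReflTransGen (EdgeAdj edge S) a b) :
    Relation.ReflTransGen (EdgeAdj edge S) b a :=
  Relation.ReflTransGen.mono (fun _ _ ⟨hx, hy, hxy⟩ => ⟨hy, hx, Finset.inter_comm (edge _) _ ▸ hxy⟩)
    b a (Relation.ReflTransGen.swap b a h)

theorem EdgeAdj.reflTransGen_mono {S T : Finset Eg} (hST : S ⊆ T) {a b : Eg}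
    (h : Relation.ReflTransGen (EdgeAdj edge S) a b) :
    Relation.ReflTransGen (EdgeAdj edge T) a b :=
  Relation.ReflTransGen.mono (fun _ _ ⟨hx, hy, hxy⟩ => ⟨hST hx, hST hy, hxy⟩) a b h

variable (edge) in
theorem connectedSub_singleton (e : Eg) : ConnectedSub edge {e} :=
  ⟨Finset.singleton_nonempty e, fun a ha b hb => by
    rw [Finset.mem_singleton.1 ha, Finset.mem_singleton.1 hb]⟩

theorem comp_empty [Fintype Eg] : comp edge (∅ : Finset Eg) = ∅ :=
  Finset.filter_false_of_mem fun _ _ ⟨hT, ⟨⟨a, ha⟩, _⟩, _⟩ => Finset.notMem_empty a (hT ha)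

variable [DecidableEq Eg]

theorem ConnectedSub.union {S₁ S₂ : Finset Eg} (h₁ : ConnectedSub edge S₁)
    (h₂ : ConnectedSub edge S₂) {a b : Eg} (ha : a ∈ S₁) (hb : b ∈ S₂)
    (hab : Relation.ReflTransGen (EdgeAdj edge (S₁ ∪ S₂)) a b) :
    ConnectedSub edge (S₁ ∪ S₂) := by
  have reach : ∀ c ∈ S₁ ∪ S₂, Relation.ReflTransGen (EdgeAdj edge (S₁ ∪ S₂)) c b := by
    intro c hc
    rcases Finset.mem_union.1 hc with hc | hc
    · exact (EdgeAdj.reflTransGen_mono Finset.subset_union_left (h₁.2 c hc a ha)).trans hab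
    · exact EdgeAdj.reflTransGen_mono Finset.subset_union_right (h₂.2 c hc b hb)
  exact ⟨h₁.1.mono Finset.subset_union_left, fun c hc d hd =>
    (reach c hc).trans (EdgeAdj.reflTransGen_symm (reach d hd))⟩

theorem exists_mem_isComponent {S : Finset Eg} {e : Eg} (he : e ∈ S) :
    ∃ γ, e ∈ γ ∧ IsComponent edge S γ := by
  set F := S.powerset.filter fun T => e ∈ T ∧ ConnectedSub edge T
  have hF : {e} ∈ F := Finset.mem_filter.2
    ⟨Finset.mem_powerset.2 (Finset.singleton_subset_iff.2 he), Finset.mem_singleton_self e,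
      connectedSub_singleton edge e⟩
  obtain ⟨γ, hγF, hmax⟩ := Finset.exists_max_image F Finset.card ⟨_, hF⟩
  obtain ⟨hγS, heγ, hγ⟩ := by simpa [F] using hγF
  refine ⟨γ, heγ, hγS, hγ, fun T hγT hTS hT => ?_⟩
  refine (Finset.eq_of_subset_of_card_le hγT (hmax T ?_)).symm
  exact Finset.mem_filter.2 ⟨Finset.mem_powerset.2 hTS, hγT heγ, hT⟩

theorem IsComponent.disjoint_of_mem_sdiff {S γ : Finset Eg} (hγ : IsComponent edge S γ)
    {a b : Eg} (ha : a ∈ γ) (hb : b ∈ S \ γ) : Disjoint (edge a) (edge b) := by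
  rw [Finset.disjoint_iff_inter_eq_empty, ← Finset.not_nonempty_iff_eq_empty]
  intro hab
  obtain ⟨hbS, hbγ⟩ := Finset.mem_sdiff.1 hb
  have hb' := Finset.mem_singleton_self b
  have hconn := hγ.2.1.union (connectedSub_singleton edge b) ha hb'
    (.single ⟨Finset.mem_union_left _ ha, Finset.mem_union_right _ hb', hab⟩)
  have := hγ.2.2 _ Finset.subset_union_left
    (Finset.union_subset hγ.1 (Finset.singleton_subset_iff.2 hbS)) hconn
  exact hbγ (this ▸ Finset.mem_union_right γ hb')

theorem IsComponent.disjoint_vertexSet_sdiff {S γ : Finset Eg} (hγ : IsComponent edge S γ) :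
    Disjoint (vertexSet edge γ) (vertexSet edge (S \ γ)) := by
  simp only [Finset.disjoint_biUnion_left, Finset.disjoint_biUnion_right]
  exact fun b hb a ha => hγ.disjoint_of_mem_sdiff ha hb

theorem IsComponent.eq_of_mem {S γ T : Finset Eg} (hγ : IsComponent edge S γ)
    (hT : IsComponent edge S T) {a : Eg} (haγ : a ∈ γ) (haT : a ∈ T) : T = γ := by
  have hconn := hT.2.1.union hγ.2.1 haT haγ .refl
  have hsub := Finset.union_subset hT.1 hγ.1
  exact (hT.2.2 _ Finset.subset_union_left hsub hconn).symm.trans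
    (hγ.2.2 _ Finset.subset_union_right hsub hconn)

theorem IsComponent.isComponent_sdiff_iff {S γ : Finset Eg} (hγ : IsComponent edge S γ)
    (T : Finset Eg) : IsComponent edge (S \ γ) T ↔ IsComponent edge S T ∧ T ≠ γ := by
  constructor
  · rintro ⟨hTS, hT, hTmax⟩
    obtain ⟨a, haT⟩ := hT.1
    have haγ : a ∉ γ := (Finset.mem_sdiff.1 (hTS haT)).2
    refine ⟨⟨hTS.trans Finset.sdiff_subset, hT, fun T' hTT' hT'S hT' => ?_⟩,
      fun h => haγ (h ▸ haT)⟩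
    refine hTmax T' hTT' (fun x hx => Finset.mem_sdiff.2 ⟨hT'S hx, fun hxγ => haγ ?_⟩) hT'
    have hγT' := hγ.2.2 _ Finset.subset_union_right (Finset.union_subset hT'S hγ.1)
      (hT'.union hγ.2.1 hx hxγ .refl)
    exact hγT' ▸ Finset.mem_union_left γ (hTT' haT)
  · rintro ⟨hTS, hTγ⟩
    have hdisj : ∀ x ∈ T, x ∉ γ := fun x hxT hxγ => hTγ (hγ.eq_of_mem hTS hxγ hxT)
    exact ⟨fun x hx => Finset.mem_sdiff.2 ⟨hTS.1 hx, hdisj x hx⟩, hTS.2.1,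
      fun T' hTT' hT'S hT' => hTS.2.2 T' hTT' (hT'S.trans Finset.sdiff_subset) hT'⟩

variable [Fintype Eg]

theorem IsComponent.comp_sdiff {S γ : Finset Eg} (hγ : IsComponent edge S γ) :
    comp edge (S \ γ) = (comp edge S).erase γ := by
  ext T
  simp only [comp, Finset.mem_erase, Finset.mem_filter, Finset.mem_univ, true_and,
    hγ.isComponent_sdiff_iff, and_comm]

end Graph

section Amplitude

variable [DecidableEq V] [Fintype V] [LinearOrder Eg] {dim : V → ℕ}

theorem oprod_mem_localOps {T : Finset V} {S : Finset Eg} {f : Eg → Matrix (Glob dim) (Glob dim) ℂ}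
    (hf : ∀ e ∈ S, f e ∈ localOps dim T) : oprod S f ∈ localOps dim T :=
  Subring.list_prod_mem _ fun X hX => by
    obtain ⟨e, he, rfl⟩ := List.mem_map.1 hX
    exact hf e ((Finset.mem_sort _).1 he)

theorem oprod_congr {n : Type*} [Fintype n] [DecidableEq n] {S : Finset Eg}
    {f g : Eg → Matrix n n ℂ} (h : ∀ e ∈ S, f e = g e) : oprod S f = oprod S g :=
  congrArg List.prod (List.map_congr_left fun e he => h e ((Finset.mem_sort _).1 he))

theorem map_oprod {m n : Type*} [Fintype m] [DecidableEq m] [Fintype n] [DecidableEq n]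
    (φ : Matrix m m ℂ →+* Matrix n n ℂ) (S : Finset Eg) (f : Eg → Matrix m m ℂ) :
    φ (oprod S f) = oprod S (φ ∘ f) := by
  rw [oprod, map_list_prod, List.map_map, oprod]

variable (edge : Eg → Finset V) (hd : ∀ v, 0 < dim v)
  (A : ∀ e : Eg, Matrix (Loc dim (edge e)) (Loc dim (edge e)) ℂ)

theorem weight_eq_oprod_apply (γ : Finset Eg) :
    weight edge dim hd A γ = oprod γ (fun e => liftGlobal dim (edge e) (A e - 1))
      (fun v => ⟨0, hd v⟩) (fun v => ⟨0, hd v⟩) := by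
  refine (liftGlobal_apply_self (vertexSet edge γ) _ (fun v => ⟨0, hd v⟩)).symm.trans ?_
  rw [← liftGlobalHom_apply, map_oprod]
  refine congrFun (congrFun (oprod_congr fun e he => ?_) _) _
  rw [Function.comp_apply, dif_pos he, map_sub, map_one, liftGlobalHom_apply, liftGlobal_liftMat,
    liftGlobal_sub_one]

theorem oprod_liftGlobal_sub_one_apply_zero [Fintype Eg] (S : Finset Eg) :
    oprod S (fun e => liftGlobal dim (edge e) (A e - 1))
        (fun v => ⟨0, hd v⟩) (fun v => ⟨0, hd v⟩) =
      ∏ γ ∈ comp edge S, weight edge dim hd A γ := by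
  induction S using Finset.strongInduction with
  | H S ih =>
  rcases S.eq_empty_or_nonempty with rfl | ⟨e, he⟩
  · simp [oprod, comp_empty]
  obtain ⟨γ, -, hγ⟩ := exists_mem_isComponent (edge := edge) he
  set D : Eg → Matrix (Glob dim) (Glob dim) ℂ := fun e => liftGlobal dim (edge e) (A e - 1)
  have hD {R : Finset Eg} {e : Eg} (he : e ∈ R) : D e ∈ localOps dim (vertexSet edge R) :=
    liftGlobal_mem_localOps (Finset.subset_biUnion_of_mem edge he) _
  have hdisj := hγ.disjoint_vertexSet_sdiff
  have hsplit : oprod S D = oprod γ D * oprod (S \ γ) D := by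
    have := prod_sort_eq_mul_inter_sdiff S γ D fun a ha b hb =>
      commute_of_mem_localOps hdisj (hD (Finset.mem_inter.1 ha).2) (hD hb)
    rwa [Finset.inter_eq_right.2 hγ.1] at this
  have hγS : γ ∈ comp edge S := Finset.mem_filter.2 ⟨Finset.mem_univ γ, hγ⟩
  rw [hsplit, mul_apply_self_of_mem_localOps hdisj (oprod_mem_localOps fun _ => hD)
    (oprod_mem_localOps fun _ => hD), ← weight_eq_oprod_apply,
    ih _ (Finset.sdiff_ssubset hγ.1 hγ.2.1.1), hγ.comp_sdiff, Finset.mul_prod_erase _ _ hγS]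

end Amplitude

theorem amplitude_polymer_representation_general [DecidableEq V] [Fintype V]
    [LinearOrder Eg] [Fintype Eg]
    (edge : Eg → Finset V)
    (dim : V → ℕ) (hd : ∀ v, 0 < dim v)
    (A : ∀ e : Eg, Matrix (Loc dim (edge e)) (Loc dim (edge e)) ℂ) :
    (oprod Finset.univ (fun e => liftGlobal dim (edge e) (A e)))
        (fun v => ⟨0, hd v⟩) (fun v => ⟨0, hd v⟩) =
      ∑ S : Finset Eg, ∏ γ ∈ comp edge S, weight edge dim hd A γ := by
  have hexpand : oprod Finset.univ (fun e => liftGlobal dim (edge e) (A e)) =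
      ∑ S ∈ Finset.univ.powerset, oprod S (fun e => liftGlobal dim (edge e) (A e - 1)) := by
    simp only [oprod, liftGlobal_sub_one, add_sub_cancel, ← prod_sort_one_add]
  rw [hexpand, Finset.powerset_univ, Matrix.sum_apply]
  exact Finset.sum_congr rfl fun S _ => oprod_liftGlobal_sub_one_apply_zero edge hd A S

/-- **Lemma 6 of the paper.** The probability amplitude
`A_{U_G} = ⟨0^{|V|}| Π_{ε∈E} U_ε |0^{|V|}⟩` of a quantum circuit on a multihypergraph
admits the abstract polymer model representation
`A_{U_G} = Σ_{S ⊆ E} Π_{γ ∈ comp(S)} w_γ`. -/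
theorem amplitude_polymer_representation [DecidableEq V] [Fintype V]
    [LinearOrder Eg] [Fintype Eg]
    (edge : Eg → Finset V) (hne : ∀ e : Eg, (edge e).Nonempty)
    (dim : V → ℕ) (hd : ∀ v, 0 < dim v)
    (A : ∀ e : Eg, Matrix (Loc dim (edge e)) (Loc dim (edge e)) ℂ)
    (hunitary : ∀ e : Eg, (A e)ᴴ * A e = 1) :
    (oprod Finset.univ (fun e => liftGlobal dim (edge e) (A e)))
        (fun v => ⟨0, hd v⟩) (fun v => ⟨0, hd v⟩) =
      ∑ S : Finset Eg, ∏ γ ∈ comp edge S, weight edge dim hd A γ :=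
  amplitude_polymer_representation_general edge dim hd A

end Stmt9
end

section
/- Let n ≥ 1, let A_1, …, A_n be (not necessarily self-adjoint) operators on a finite-dimensional complex Hilbert space with operator norms ‖A_i‖ ≤ 1 for all i, and let β ∈ ℂ. Then ‖ Σ_{T ⊆ {1,…,n}} (−1)^{|T|} exp(−β Σ_{i∈T} A_i) ‖ ≤ (e^{|β|} − 1)^n. -/
/-!
Expanding each exponential in its power series, the `m`-th Taylor coefficient of the alternating
sum is `∑_T (-1)^|T| (∑_{i ∈ T} A_i)^m`. Expanding the power into words `A_{ρ 1} ⋯ A_{ρ m}` and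
summing the signs over the sets `T` that contain every letter of `ρ` leaves only the words using
all `n` letters, each with sign `(-1)^n`. Such a word has norm at most `1`, so the coefficient is
bounded by the number of surjections `Fin m → Fin n`; running the same expansion for the scalars
`A_i = 1` identifies these counts with the Taylor coefficients of `(e^x - 1)^n`.
-/

open Finset Function NormedSpace
open scoped Nat

theorem sum_neg_one_pow_card_of_superset {ι S : Type*} [Fintype ι] [DecidableEq ι] [Ring S]
    (s : Finset ι) :
    ∑ t with s ⊆ t, (-1 : S) ^ #t = if s = univ then (-1) ^ Fintype.card ι else 0 := by
  have hsupersets : ({t | s ⊆ t} : Finset (Finset ι)) = sᶜ.powerset.image (s ∪ ·) := by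
    rw [compl_eq_univ_sdiff, ← Icc_eq_image_powerset (subset_univ s)]
    ext t; simp
  have hinj : Set.InjOn (s ∪ ·) (sᶜ.powerset : Set (Finset ι)) := by
    intro u hu v hv huv
    simp only [coe_powerset, Set.mem_preimage, Set.mem_powerset_iff, coe_subset] at hu hv
    simpa [union_sdiff_cancel_left (disjoint_of_subset_right hu disjoint_compl_right),
      union_sdiff_cancel_left (disjoint_of_subset_right hv disjoint_compl_right)] using
      congrArg (· \ s) huv
  have hcard : ∀ u ∈ sᶜ.powerset, (-1 : S) ^ #(s ∪ u) = (-1) ^ #s * (-1) ^ #u := fun u hu => by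
    rw [card_union_of_disjoint (disjoint_of_subset_right (mem_powerset.1 hu) disjoint_compl_right),
      pow_add]
  have halternating : ∑ u ∈ sᶜ.powerset, (-1 : S) ^ #u = if sᶜ = ∅ then 1 else 0 := by
    exact_mod_cast congrArg (Int.cast : ℤ → S) (sum_powerset_neg_one_pow_card (x := sᶜ))
  rw [hsupersets, sum_image hinj, sum_congr rfl hcard, ← mul_sum, halternating]
  simp only [compl_eq_empty_iff]
  split_ifs with h
  · simp [h]
  · simp

theorem sum_pow_eq_sum_piFinset_prod_ofFn {ι R : Type*} [DecidableEq ι] [Semiring R]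
    (s : Finset ι) (f : ι → R) (m : ℕ) :
    (∑ i ∈ s, f i) ^ m =
      ∑ ρ ∈ Fintype.piFinset fun _ : Fin m => s, (List.ofFn fun k => f (ρ k)).prod := by
  simpa using (MultilinearMap.mkPiAlgebraFin ℕ m R).map_sum_finset (fun _ => f) (fun _ => s)

theorem sum_neg_one_pow_smul_sum_pow {ι S R : Type*} [Fintype ι] [DecidableEq ι] [Ring S]
    [Ring R] [Module S R] (f : ι → R) (m : ℕ) :
    ∑ t : Finset ι, (-1 : S) ^ #t • (∑ i ∈ t, f i) ^ m =
      (-1 : S) ^ Fintype.card ι • ∑ ρ : Fin m → ι with Surjective ρ,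
        (List.ofFn fun k => f (ρ k)).prod := by
  have hpiFinset (t : Finset ι) :
      Fintype.piFinset (fun _ : Fin m => t) = univ.filter fun ρ => image ρ univ ⊆ t := by
    ext ρ; simp [image_subset_iff]
  have hsurj (ρ : Fin m → ι) : image ρ univ = univ ↔ Surjective ρ := by
    simp [eq_univ_iff_forall, Surjective]
  calc ∑ t : Finset ι, (-1 : S) ^ #t • (∑ i ∈ t, f i) ^ m
      = ∑ ρ : Fin m → ι, (∑ t with image ρ univ ⊆ t, (-1 : S) ^ #t) •
          (List.ofFn fun k => f (ρ k)).prod := by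
        simp only [sum_pow_eq_sum_piFinset_prod_ofFn, hpiFinset, smul_sum, sum_filter, sum_smul,
          ite_smul, zero_smul, smul_ite, smul_zero]
        exact sum_comm
    _ = ∑ ρ : Fin m → ι, (if Surjective ρ then (-1 : S) ^ Fintype.card ι else 0) •
          (List.ofFn fun k => f (ρ k)).prod := by
        simp only [sum_neg_one_pow_card_of_superset, hsurj]
    _ = _ := by
        simp only [ite_smul, zero_smul, smul_sum, sum_filter, smul_ite, smul_zero]

theorem norm_list_prod_le_one {R : Type*} [SeminormedRing R] (h1 : ‖(1 : R)‖ ≤ 1) {l : List R}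
    (hl : ∀ x ∈ l, ‖x‖ ≤ 1) : ‖l.prod‖ ≤ 1 :=
  List.prod_induction (‖·‖ ≤ 1)
    (fun a b ha hb => (norm_mul_le a b).trans (mul_le_one₀ ha (norm_nonneg b) hb)) h1 hl

theorem norm_sum_neg_one_pow_smul_sum_pow_le {ι 𝕂 R : Type*} [Fintype ι] [DecidableEq ι]
    [NormedField 𝕂] [SeminormedRing R] [NormedSpace 𝕂 R] (h1 : ‖(1 : R)‖ ≤ 1) {f : ι → R}
    (hf : ∀ i, ‖f i‖ ≤ 1) (m : ℕ) :
    ‖∑ t : Finset ι, (-1 : 𝕂) ^ #t • (∑ i ∈ t, f i) ^ m‖ ≤ #{ρ : Fin m → ι | Surjective ρ} := by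
  rw [sum_neg_one_pow_smul_sum_pow, norm_smul, norm_pow, norm_neg, norm_one, one_pow, one_mul]
  refine (norm_sum_le _ _).trans ?_
  simpa using sum_le_card_nsmul _ _ 1 fun ρ _ =>
    norm_list_prod_le_one h1 fun x hx => by obtain ⟨k, rfl⟩ := List.mem_ofFn.1 hx; exact hf _

theorem hasSum_sum_smul_exp {𝕂 R κ : Type*} [RCLike 𝕂] [NormedRing R] [NormedAlgebra 𝕂 R]
    [CompleteSpace R] (s : Finset κ) (a : κ → 𝕂) (x : κ → R) (c : 𝕂) :
    HasSum (fun m => ((m ! : 𝕂)⁻¹ * c ^ m) • ∑ k ∈ s, a k • x k ^ m)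
      (∑ k ∈ s, a k • exp (c • x k)) := by
  refine (hasSum_sum fun k _ =>
    (exp_series_hasSum_exp' (𝕂 := 𝕂) (c • x k)).const_smul (a k)).congr_fun fun m => ?_
  simp only [smul_sum, smul_pow, smul_smul]
  exact sum_congr rfl fun k _ => by rw [mul_comm]

theorem sum_neg_one_pow_card_mul_pow_card (ι : Type*) [Fintype ι] {R : Type*} [CommRing R]
    (y : R) :
    ∑ t : Finset ι, (-1) ^ #t * y ^ #t = (1 - y) ^ Fintype.card ι := by
  simpa [← mul_pow, neg_add_eq_sub] using Fintype.sum_pow_mul_eq_add_pow ι (-y) 1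

theorem hasSum_card_surjective (ι : Type*) [Fintype ι] [DecidableEq ι] (x : ℝ) :
    HasSum (fun m => ((m ! : ℝ)⁻¹ * x ^ m) * #{ρ : Fin m → ι | Surjective ρ})
      ((Real.exp x - 1) ^ Fintype.card ι) := by
  have hcard (m : ℕ) : (#{ρ : Fin m → ι | Surjective ρ} : ℝ) =
      (-1) ^ Fintype.card ι * ∑ t : Finset ι, (-1 : ℝ) ^ #t * (#t : ℝ) ^ m := by
    have h := sum_neg_one_pow_smul_sum_pow (S := ℝ) (fun _ : ι => (1 : ℝ)) m
    simp only [sum_const, nsmul_eq_mul, mul_one, smul_eq_mul, List.ofFn_const,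
      List.prod_replicate, one_pow] at h
    rw [h, ← mul_assoc, ← mul_pow]
    norm_num
  have hexp : ∑ t : Finset ι, (-1 : ℝ) ^ #t * exp (x * #t) = (1 - Real.exp x) ^ Fintype.card ι := by
    simp only [← Real.exp_eq_exp_ℝ, mul_comm x, Real.exp_nat_mul, sum_neg_one_pow_card_mul_pow_card]
  have h := (hasSum_sum_smul_exp (𝕂 := ℝ) univ (fun t : Finset ι => (-1) ^ #t) (fun t => (#t : ℝ))
    x).mul_left ((-1) ^ Fintype.card ι)
  simp only [smul_eq_mul, hexp, ← mul_pow, neg_one_mul, neg_sub] at h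
  simp only [hcard]
  exact h.congr_fun fun m => by ring

theorem norm_sum_neg_one_pow_smul_exp_le {ι 𝕂 R : Type*} [Fintype ι] [DecidableEq ι] [RCLike 𝕂]
    [NormedRing R] [NormedAlgebra 𝕂 R] [CompleteSpace R] (h1 : ‖(1 : R)‖ ≤ 1) {f : ι → R}
    (hf : ∀ i, ‖f i‖ ≤ 1) (c : 𝕂) :
    ‖∑ t : Finset ι, (-1 : 𝕂) ^ #t • exp (c • ∑ i ∈ t, f i)‖ ≤
      (Real.exp ‖c‖ - 1) ^ Fintype.card ι := by
  refine (hasSum_sum_smul_exp univ (fun t : Finset ι => (-1 : 𝕂) ^ #t) (fun t => ∑ i ∈ t, f i)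
    c).norm_le_of_bounded (hasSum_card_surjective ι ‖c‖) fun m => ?_
  rw [norm_smul, norm_mul, norm_inv, norm_pow, RCLike.norm_natCast]
  gcongr
  exact norm_sum_neg_one_pow_smul_sum_pow_le h1 hf m

theorem inclusion_exclusion_exp_norm_bound_general
    {E : Type*} [NormedAddCommGroup E] [InnerProductSpace ℂ E] [FiniteDimensional ℂ E]
    (n : ℕ) (A : Fin n → E →L[ℂ] E) (hA : ∀ i, ‖A i‖ ≤ 1) (β : ℂ) :
    ‖∑ T : Finset (Fin n), ((-1 : ℂ) ^ T.card) •
        NormedSpace.exp ((-β) • ∑ i ∈ T, A i)‖ ≤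
      (Real.exp (‖β‖) - 1) ^ n := by
  simpa using norm_sum_neg_one_pow_smul_exp_le ContinuousLinearMap.norm_id_le hA (-β)

/-- **Lemma 10 of the paper (weight bound computation).** Let `A_1, …, A_n` be
operators of norm at most `1` on a finite-dimensional complex Hilbert space and let
`β ∈ ℂ`.  Then `‖Σ_{T ⊆ {1,…,n}} (−1)^{|T|} exp(−β Σ_{i∈T} A_i)‖ ≤ (e^{|β|} − 1)^n`. -/
theorem inclusion_exclusion_exp_norm_bound
    {E : Type*} [NormedAddCommGroup E] [InnerProductSpace ℂ E] [FiniteDimensional ℂ E]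
    (n : ℕ) (hn : 1 ≤ n) (A : Fin n → E →L[ℂ] E) (hA : ∀ i, ‖A i‖ ≤ 1) (β : ℂ) :
    ‖∑ T : Finset (Fin n), ((-1 : ℂ) ^ T.card) •
        NormedSpace.exp ((-β) • ∑ i ∈ T, A i)‖ ≤
      (Real.exp (‖β‖) - 1) ^ n :=
  inclusion_exclusion_exp_norm_bound_general n A hA β
end

section
/- Let Φ = (1/4)(X⊗X − Y⊗Y − Z⊗Z), a self-adjoint operator on ℂ²⊗ℂ², where X, Y, Z are the Pauli matrices. Then ⟨00| exp(−iπ Φ) |00⟩ = 0 while Tr[exp(−iπ Φ)] = 2 e^{−iπ/4} ≠ 0. Consequently, for the quantum spin system on the multigraph with two vertices joined by Δ parallel edges, each carrying the interaction Φ, with the operator Ψ(v) = |0⟩⟨0| at each vertex, the thermal expectation value at inverse temperature β = iπ/Δ equals 0; i.e. the algorithmic condition for thermal expectation values is optimal in the sense of zero freeness. -/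
/-!
Φ = ¼(1 - P) - ¾P, where P is the projector onto the Bell state (|00⟩ - |11⟩)/√2. For an
idempotent P one has exp(a(1 - P) + bP) = eᵃ(1 - P) + eᵇP, and the two eigenvalues of -iπΦ
differ by iπ, so exp(-iπΦ) = e^{-iπ/4}(1 - 2P). Since ⟨00|P|00⟩ = ½ and Tr P = 1, the
⟨00|·|00⟩ entry vanishes while the trace is 2e^{-iπ/4}. At β = iπ/Δ the factor Δ of H_G
cancels, and Tr[(P0 ⊗ P0) M] is the ⟨00|·|00⟩ entry of M.
-/

namespace IsIdempotentElem

variable {𝕂 𝔸 : Type*} [RCLike 𝕂] [Ring 𝔸] [Algebra 𝕂 𝔸] {P : 𝔸}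

theorem pow_smul_one_sub_add_smul (hP : IsIdempotentElem P) (a b : 𝕂) (n : ℕ) :
    (a • (1 - P) + b • P) ^ n = a ^ n • (1 - P) + b ^ n • P := by
  induction n with
  | zero => simp
  | succ n ih =>
    have hQ : (1 - P) * (1 - P) = 1 - P := hP.one_sub.eq
    have hQP : (1 - P) * P = 0 := by rw [sub_mul, one_mul, hP.eq, sub_self]
    have hPQ : P * (1 - P) = 0 := by rw [mul_sub, mul_one, hP.eq, sub_self]
    rw [pow_succ, ih, pow_succ, pow_succ]
    simp only [add_mul, mul_add, smul_mul_smul_comm, hQ, hQP, hPQ, hP.eq, smul_zero,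
      add_zero, zero_add]

variable [TopologicalSpace 𝔸] [IsTopologicalRing 𝔸] [T2Space 𝔸] [ContinuousSMul 𝕂 𝔸]

theorem exp_smul_one_sub_add_smul (hP : IsIdempotentElem P) (a b : 𝕂) :
    NormedSpace.exp (a • (1 - P) + b • P) =
      NormedSpace.exp a • (1 - P) + NormedSpace.exp b • P := by
  rw [congrFun (NormedSpace.exp_eq_tsum 𝕂)]
  refine HasSum.tsum_eq ?_
  simp only [hP.pow_smul_one_sub_add_smul, smul_add, smul_smul]
  exact ((NormedSpace.exp_series_hasSum_exp' (𝕂 := 𝕂) a).smul_const _).add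
    ((NormedSpace.exp_series_hasSum_exp' (𝕂 := 𝕂) b).smul_const _)

end IsIdempotentElem

theorem Matrix.isIdempotentElem_inv_smul_vecMulVec {n 𝕜 : Type*} [Fintype n] [Field 𝕜]
    {u v : n → 𝕜} {c : 𝕜} (hc : c ≠ 0) (huv : v ⬝ᵥ u = c) :
    IsIdempotentElem (c⁻¹ • Matrix.vecMulVec u v) := by
  rw [IsIdempotentElem, smul_mul_smul_comm, Matrix.vecMulVec_mul_vecMulVec, huv,
    Matrix.vecMulVec_smul, smul_smul, mul_assoc, inv_mul_cancel₀ hc, mul_one]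

open scoped Matrix Kronecker

namespace Stmt19

noncomputable def X : Matrix (Fin 2) (Fin 2) ℂ := !![0, 1; 1, 0]

noncomputable def Y : Matrix (Fin 2) (Fin 2) ℂ := !![0, -Complex.I; Complex.I, 0]

noncomputable def Z : Matrix (Fin 2) (Fin 2) ℂ := !![1, 0; 0, -1]

noncomputable def Φ : Matrix (Fin 2 × Fin 2) (Fin 2 × Fin 2) ℂ :=
  (1 / 4 : ℂ) • (X ⊗ₖ X - Y ⊗ₖ Y - Z ⊗ₖ Z)

noncomputable def P0 : Matrix (Fin 2) (Fin 2) ℂ := !![1, 0; 0, 0]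

open Complex Matrix Real

noncomputable def bellPhiMinus : Fin 2 × Fin 2 → ℂ := Pi.single (0, 0) 1 - Pi.single (1, 1) 1

noncomputable def bellProj : Matrix (Fin 2 × Fin 2) (Fin 2 × Fin 2) ℂ :=
  (2 : ℂ)⁻¹ • vecMulVec bellPhiMinus bellPhiMinus

theorem bellPhiMinus_dotProduct_self : bellPhiMinus ⬝ᵥ bellPhiMinus = 2 := by
  norm_num [bellPhiMinus, dotProduct, Fintype.sum_prod_type, Pi.single_apply]

theorem isIdempotentElem_bellProj : IsIdempotentElem bellProj :=
  isIdempotentElem_inv_smul_vecMulVec two_ne_zero bellPhiMinus_dotProduct_self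

theorem trace_bellProj : bellProj.trace = 1 := by
  rw [bellProj, trace_smul, trace_vecMulVec, bellPhiMinus_dotProduct_self, smul_eq_mul,
    inv_mul_cancel₀ two_ne_zero]

theorem bellProj_zero_zero : bellProj (0, 0) (0, 0) = 2⁻¹ := by
  simp [bellProj, bellPhiMinus, vecMulVec_apply]

theorem Φ_eq_spectral : Φ = (1 / 4 : ℂ) • (1 - bellProj) + (-3 / 4 : ℂ) • bellProj := by
  ext ⟨i, j⟩ ⟨k, l⟩
  fin_cases i <;> fin_cases j <;> fin_cases k <;> fin_cases l <;>
    simp [Φ, X, Y, Z, bellProj, bellPhiMinus, one_apply, vecMulVec_apply] <;> ring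

theorem exp_neg_I_pi_smul_Φ :
    NormedSpace.exp ((-(I * π)) • Φ) = cexp (-(I * π) / 4) • (1 - (2 : ℂ) • bellProj) := by
  have hexp : cexp (-(I * π) * (-3 / 4)) = -cexp (-(I * π) / 4) := by
    rw [show -(I * π) * (-3 / 4) = -(I * π) / 4 + π * I by ring, Complex.exp_add,
      exp_pi_mul_I, mul_neg_one]
  rw [Φ_eq_spectral, smul_add, smul_smul, smul_smul, mul_one_div,
    isIdempotentElem_bellProj.exp_smul_one_sub_add_smul, ← Complex.exp_eq_exp_ℂ, hexp]
  module

theorem P0_kronecker_P0 : P0 ⊗ₖ P0 = single (0, 0) (0, 0) 1 := by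
  have hP0 : P0 = single 0 0 1 := by
    ext i j; fin_cases i <;> fin_cases j <;> simp [P0]
  rw [hP0, single_kronecker_single, one_mul]

/-- **Theorem 12 of the paper.** For `Φ = (1/4)(X⊗X − Y⊗Y − Z⊗Z)` one has
`⟨00| exp(−iπΦ) |00⟩ = 0` while `Tr[exp(−iπΦ)] = 2·e^{−iπ/4} ≠ 0`.  Consequently,
for the quantum spin system on the multigraph with two vertices joined by `Δ`
parallel edges each carrying the interaction `Φ`, with `Ψ(v) = |0⟩⟨0|` at each
vertex, the thermal expectation value at inverse temperature `β = iπ/Δ` is `0`. -/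
theorem thermal_expectation_zero :
    (NormedSpace.exp ((-(Complex.I * Real.pi)) • Φ))
        ((0 : Fin 2), (0 : Fin 2)) ((0 : Fin 2), (0 : Fin 2)) = 0 ∧
    Matrix.trace (NormedSpace.exp ((-(Complex.I * Real.pi)) • Φ)) =
      2 * Complex.exp (-(Complex.I * Real.pi) / 4) ∧
    Matrix.trace (NormedSpace.exp ((-(Complex.I * Real.pi)) • Φ)) ≠ 0 ∧
    ∀ Δ : ℕ, 1 ≤ Δ →
      Matrix.trace ((P0 ⊗ₖ P0) *
          NormedSpace.exp ((-(Complex.I * Real.pi / (Δ : ℂ))) • ((Δ : ℂ) • Φ))) /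
        Matrix.trace (NormedSpace.exp
          ((-(Complex.I * Real.pi / (Δ : ℂ))) • ((Δ : ℂ) • Φ))) = 0 := by
  have hentry : NormedSpace.exp ((-(I * π)) • Φ) (0, 0) (0, 0) = 0 := by
    rw [exp_neg_I_pi_smul_Φ]
    simp [bellProj_zero_zero]
  have htrace : (NormedSpace.exp ((-(I * π)) • Φ)).trace = 2 * cexp (-(I * π) / 4) := by
    rw [exp_neg_I_pi_smul_Φ, trace_smul, trace_sub, trace_one, trace_smul, trace_bellProj]
    norm_num [mul_comm]
  refine ⟨hentry, htrace, htrace ▸ mul_ne_zero two_ne_zero (exp_ne_zero _), fun Δ hΔ => ?_⟩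
  have hβ : (-(I * π / Δ)) • ((Δ : ℂ) • Φ) = (-(I * π)) • Φ := by
    rw [smul_smul, neg_mul, div_mul_cancel₀ _ (by exact_mod_cast (by omega : Δ ≠ 0))]
  rw [hβ, P0_kronecker_P0, trace_single_mul, hentry, smul_zero, zero_div]

end Stmt19
end
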